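/- arXiv:math/0403338 — 9 statements merged into one kernel-verified Lean document; each statement's English description precedes it below -/
import Mathlib

section
/- Let A, B₁, B₂ be finite nonempty sets in a commutative group, with |A| = n, |A + B₁| = K₁n and |A + B₂| = K₂n. Then there is a nonempty set A' ⊆ A such that |A' + B₁ + B₂| ≤ K₁K₂|A'|. -/
/-!
Let `X ⊆ A` minimise `|X + S| / |X|` for `S = B₁ + B₂`, with minimum `d`, so that
`d |Z| ≤ |Z + S|` for every `Z ⊆ A`; it suffices to show `d |A|² ≤ |A + B₁| |A + B₂|`.
Such expansion bounds multiply under products (a layer-cake count over the fibres of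
`Z ⊆ A₁ × A₂`). Petridis' lemma in `G × G`, applied to `A × A` and the symmetrised set
`B₁ × B₂ ∪ B₂ × B₁`, whose double sum contains `S × S`, then gives
`d |A|² ≤ 2 |A + B₁| |A + B₂|`. Applied to the `2^k`-fold products this loses only
the factor `2`, and letting `k → ∞` removes it.
-/

open Pointwise Finset

lemma le_of_forall_pow_two_pow_le_mul {a b c : ℚ≥0} (h : ∀ k, a ^ 2 ^ k ≤ c * b ^ 2 ^ k) :
    a ≤ b := by
  by_contra! hba
  obtain rfl | hb := eq_zero_or_pos b
  · simpa [hba.ne'] using h 0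
  have hq : 1 < a / b := (one_lt_div hb).2 hba
  obtain ⟨N, hN⟩ := pow_unbounded_of_one_lt c hq
  have hN' : c < (a / b) ^ 2 ^ N :=
    hN.trans_le (pow_le_pow_right₀ hq.le Nat.lt_two_pow_self.le)
  have := mul_lt_mul_of_pos_right hN' (pow_pos hb (2 ^ N))
  rw [div_pow, div_mul_cancel₀ _ (pow_pos hb _).ne'] at this
  exact (h N).not_gt this

namespace Finset

variable {α β : Type*}

lemma sum_range_card_filter_lt (s : Finset α) (f : α → ℕ) {T : ℕ} (hf : ∀ x ∈ s, f x ≤ T) :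
    ∑ n ∈ range T, #{x ∈ s | n < f x} = ∑ x ∈ s, f x := by
  simp_rw [card_filter]
  rw [sum_comm]
  refine sum_congr rfl fun x hx => ?_
  have : {n ∈ range T | n < f x} = range (f x) := by
    ext n
    simp only [mem_filter, mem_range]
    have := hf x hx
    omega
  rw [← card_filter, this, card_range]

lemma mul_sum_le_sum_of_mul_card_filter_lt_le (s : Finset α) (t : Finset β) (f : α → ℕ)
    (g : β → ℕ) (d : ℚ≥0) (h : ∀ n, d * #{x ∈ s | n < f x} ≤ #{y ∈ t | n < g y}) :
    d * ∑ x ∈ s, (f x : ℚ≥0) ≤ ∑ y ∈ t, (g y : ℚ≥0) := by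
  set T := s.sup f ⊔ t.sup g
  rw [← Nat.cast_sum, ← Nat.cast_sum,
    ← sum_range_card_filter_lt s f fun x hx => le_sup_of_le_left (le_sup hx),
    ← sum_range_card_filter_lt t g (T := T) fun y hy => le_sup_of_le_right (le_sup hy)]
  push_cast
  rw [mul_sum]
  exact sum_le_sum fun n _ => h n

noncomputable def fiber (X : Finset (α × β)) (u : α) : Finset β :=
  X.preimage (Prod.mk u) (Prod.mk_right_injective u).injOn

@[simp]
lemma mem_fiber {X : Finset (α × β)} {u : α} {v : β} : v ∈ X.fiber u ↔ (u, v) ∈ X :=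
  mem_preimage

lemma card_eq_sum_card_fiber [DecidableEq α] {X : Finset (α × β)} {s : Finset α}
    (hX : ∀ p ∈ X, p.1 ∈ s) : #X = ∑ u ∈ s, #(X.fiber u) := by
  rw [card_eq_sum_card_fiberwise hX]
  refine sum_congr rfl fun u _ => card_nbij' Prod.snd (Prod.mk u) ?_ ?_ ?_ ?_
  · rintro ⟨u', v⟩ h
    obtain ⟨h, rfl⟩ := mem_filter.1 h
    simpa using h
  · intro v hv
    simpa using hv
  · rintro ⟨u', v⟩ h
    obtain ⟨-, rfl⟩ := mem_filter.1 h
    rfl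
  · intro v _
    rfl

lemma fiber_add_subset_fiber_add_product [Add α] [Add β] [DecidableEq α] [DecidableEq β]
    (X : Finset (α × β)) (u : α) {S : Finset α} {s : α} (hs : s ∈ S) (T : Finset β) :
    X.fiber u + T ⊆ (X + S ×ˢ T).fiber (u + s) := by
  intro w hw
  obtain ⟨v, hv, t, ht, rfl⟩ := mem_add.1 hw
  exact mem_fiber.2 (add_mem_add (mem_fiber.1 hv) (mk_mem_product hs ht))

def ExpandsBy [Add α] [DecidableEq α] (A S : Finset α) (d : ℚ≥0) : Prop :=
  ∀ Z ⊆ A, d * #Z ≤ #(Z + S)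

theorem ExpandsBy.product [Add α] [Add β] [DecidableEq α] [DecidableEq β]
    {A₁ S₁ : Finset α} {A₂ S₂ : Finset β} {d₁ d₂ : ℚ≥0}
    (h₁ : ExpandsBy A₁ S₁ d₁) (h₂ : ExpandsBy A₂ S₂ d₂) :
    ExpandsBy (A₁ ×ˢ A₂) (S₁ ×ˢ S₂) (d₁ * d₂) := by
  intro X hX
  set Y := X + S₁ ×ˢ S₂
  have hX₁ : ∀ p ∈ X, p.1 ∈ A₁ := fun p hp => (mem_product.1 (hX hp)).1
  have hY₁ : ∀ p ∈ Y, p.1 ∈ A₁ + S₁ := by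
    intro p hp
    obtain ⟨x, hx, s, hs, rfl⟩ := mem_add.1 hp
    exact add_mem_add (hX₁ x hx) (mem_product.1 hs).1
  have hlayer : ∀ n, d₁ * #{u ∈ A₁ | n < #(X.fiber u + S₂)} ≤
      #{w ∈ A₁ + S₁ | n < #(Y.fiber w)} := by
    intro n
    refine (h₁ _ (filter_subset _ _)).trans (Nat.cast_le.2 (card_le_card fun w hw => ?_))
    obtain ⟨u, hu, s, hs, rfl⟩ := mem_add.1 hw
    obtain ⟨hu, hn⟩ := mem_filter.1 hu
    exact mem_filter.2 ⟨add_mem_add hu hs,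
      hn.trans_le (card_le_card (fiber_add_subset_fiber_add_product X u hs S₂))⟩
  calc d₁ * d₂ * #X = d₁ * ∑ u ∈ A₁, d₂ * #(X.fiber u) := by
        simp only [card_eq_sum_card_fiber hX₁, Nat.cast_sum, mul_sum, mul_assoc]
    _ ≤ d₁ * ∑ u ∈ A₁, (#(X.fiber u + S₂) : ℚ≥0) := by
        gcongr with u
        exact h₂ _ fun v hv => (mem_product.1 (hX (mem_fiber.1 hv))).2
    _ ≤ ∑ w ∈ A₁ + S₁, (#(Y.fiber w) : ℚ≥0) :=
        mul_sum_le_sum_of_mul_card_filter_lt_le _ _ _ _ _ hlayer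
    _ = #Y := by rw [card_eq_sum_card_fiber hY₁, Nat.cast_sum]

lemma exists_subset_expandsBy_card_add_div_card [Add α] [DecidableEq α] {A : Finset α}
    (hA : A.Nonempty) (S : Finset α) :
    ∃ X ⊆ A, X.Nonempty ∧ A.ExpandsBy S (#(X + S) / #X) := by
  obtain ⟨X, hX, hmin⟩ := exists_min_image (A.powerset.erase ∅) (fun Z => (#(Z + S) : ℚ≥0) / #Z)
    ⟨A, mem_erase_of_ne_of_mem hA.ne_empty (mem_powerset_self _)⟩
  rw [mem_erase, mem_powerset, ← nonempty_iff_ne_empty] at hX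
  refine ⟨X, hX.2, hX.1, fun Z hZ => ?_⟩
  obtain rfl | hZ' := Z.eq_empty_or_nonempty
  · simp
  exact (le_div_iff₀ (by simpa using hZ'.card_pos)).1
    (hmin Z (mem_erase_of_ne_of_mem hZ'.ne_empty (mem_powerset.2 hZ)))

theorem exists_subset_card_add_add_mul_card_le [AddCommGroup α] [DecidableEq α] {A : Finset α}
    (hA : A.Nonempty) (B : Finset α) :
    ∃ X ⊆ A, X.Nonempty ∧ ∀ C : Finset α, #(X + B + C) * #A ≤ #(A + B) * #(X + C) := by
  obtain ⟨X, hXA, hX, hexp⟩ := exists_subset_expandsBy_card_add_div_card hA B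
  have hmin : ∀ Z ⊆ A, #(X + B) * #Z ≤ #(Z + B) * #X := fun Z hZ => by
    have := hexp Z hZ
    rw [div_mul_eq_mul_div, div_le_iff₀ (by simpa using hX.card_pos)] at this
    exact_mod_cast this
  refine ⟨X, hXA, hX, fun C => Nat.le_of_mul_le_mul_right ?_ hX.card_pos⟩
  have hpet := pluennecke_petridis_inequality_add C fun Z hZ => hmin Z (hZ.trans hXA)
  rw [add_comm C X, add_right_comm X C B] at hpet
  calc #(X + B + C) * #A * #X = #(X + B + C) * #X * #A := by ring
    _ ≤ #(X + B) * #(X + C) * #A := by gcongr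
    _ = #(X + B) * #A * #(X + C) := by ring
    _ ≤ #(A + B) * #X * #(X + C) := Nat.mul_le_mul_right _ (hmin A subset_rfl)
    _ = #(A + B) * #(X + C) * #X := by ring

theorem ExpandsBy.mul_card_sq_le_two_mul [AddCommGroup α] [DecidableEq α] {A B₁ B₂ : Finset α}
    {d : ℚ≥0} (h : A.ExpandsBy (B₁ + B₂) d) : d * #A ^ 2 ≤ 2 * (#(A + B₁) * #(A + B₂)) := by
  obtain rfl | hA := A.eq_empty_or_nonempty
  · simp
  set 𝒜 := A ×ˢ A
  set ℬ := B₁ ×ˢ B₂ ∪ B₂ ×ˢ B₁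
  obtain ⟨𝒳, h𝒳𝒜, h𝒳, hpet⟩ := exists_subset_card_add_add_mul_card_le (hA.product hA) ℬ
  have hlow : d * d * #𝒳 ≤ #(𝒳 + ℬ + ℬ) := by
    have hsq : (B₁ + B₂) ×ˢ (B₁ + B₂) ⊆ ℬ + ℬ := by
      nth_rw 2 [add_comm B₁ B₂]
      rw [← product_add_product_comm]
      exact add_subset_add subset_union_left subset_union_right
    calc d * d * #𝒳 ≤ #(𝒳 + (B₁ + B₂) ×ˢ (B₁ + B₂)) := h.product h 𝒳 h𝒳𝒜
      _ ≤ #(𝒳 + ℬ + ℬ) := by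
        rw [add_assoc]
        exact_mod_cast card_le_card (add_subset_add_left hsq)
  have hup : #(𝒜 + ℬ) ≤ 2 * (#(A + B₁) * #(A + B₂)) := by
    calc #(𝒜 + ℬ) ≤ #(𝒜 + B₁ ×ˢ B₂) + #(𝒜 + B₂ ×ˢ B₁) := by
          rw [add_union]
          exact card_union_le _ _
      _ = 2 * (#(A + B₁) * #(A + B₂)) := by
          simp only [𝒜, product_add_product_comm, card_product]
          ring
  have key : #(𝒳 + ℬ + ℬ) * #𝒜 * #𝒜 ≤ #(𝒜 + ℬ) * #(𝒜 + ℬ) * #𝒳 := by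
    have hpet₀ := hpet 0
    rw [add_zero, add_zero] at hpet₀
    calc #(𝒳 + ℬ + ℬ) * #𝒜 * #𝒜 ≤ #(𝒜 + ℬ) * #(𝒳 + ℬ) * #𝒜 :=
          Nat.mul_le_mul_right _ (hpet ℬ)
      _ = #(𝒜 + ℬ) * (#(𝒳 + ℬ) * #𝒜) := by ring
      _ ≤ #(𝒜 + ℬ) * (#(𝒜 + ℬ) * #𝒳) := Nat.mul_le_mul_left _ hpet₀
      _ = #(𝒜 + ℬ) * #(𝒜 + ℬ) * #𝒳 := by ring
  have hsq : (d * #A ^ 2) ^ 2 * #𝒳 ≤ (2 * (#(A + B₁) * #(A + B₂) : ℚ≥0)) ^ 2 * #𝒳 := by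
    calc (d * #A ^ 2) ^ 2 * #𝒳 = d * d * #𝒳 * #𝒜 * #𝒜 := by
          simp only [𝒜, card_product]
          push_cast
          ring
      _ ≤ #(𝒳 + ℬ + ℬ) * #𝒜 * #𝒜 := by gcongr
      _ ≤ #(𝒜 + ℬ) * #(𝒜 + ℬ) * #𝒳 := by exact_mod_cast key
      _ ≤ (2 * (#(A + B₁) * #(A + B₂) : ℚ≥0)) ^ 2 * #𝒳 := by
        rw [sq]
        gcongr <;> exact_mod_cast hup
  exact (pow_le_pow_iff_left₀ (by positivity) (by positivity) two_ne_zero).1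
    (le_of_mul_le_mul_right hsq (by simpa using h𝒳.card_pos))

theorem ExpandsBy.mul_card_sq_le [AddCommGroup α] [DecidableEq α]
    {A B₁ B₂ : Finset α} {d : ℚ≥0} (h : A.ExpandsBy (B₁ + B₂) d) :
    d * #A ^ 2 ≤ #(A + B₁) * #(A + B₂) := by
  refine le_of_forall_pow_two_pow_le_mul (c := 2) fun k => ?_
  induction k generalizing α A B₁ B₂ d with
  | zero => simpa using h.mul_card_sq_le_two_mul
  | succ k ih =>
    have hprod := ih (A := A ×ˢ A) (B₁ := B₁ ×ˢ B₁) (B₂ := B₂ ×ˢ B₂) (d := d * d)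
      (by rw [product_add_product_comm]; exact h.product h)
    simp only [product_add_product_comm, card_product, Nat.cast_mul] at hprod
    calc (d * #A ^ 2) ^ 2 ^ (k + 1) = (d * d * (#A * #A : ℚ≥0) ^ 2) ^ 2 ^ k := by ring
      _ ≤ _ := hprod
      _ = 2 * (#(A + B₁) * #(A + B₂) : ℚ≥0) ^ 2 ^ (k + 1) := by ring

theorem exists_subset_card_add_add_mul_card_sq_le [AddCommGroup α] [DecidableEq α]
    {A : Finset α} (hA : A.Nonempty) (B₁ B₂ : Finset α) :
    ∃ X ⊆ A, X.Nonempty ∧ #(X + B₁ + B₂) * #A ^ 2 ≤ #(A + B₁) * #(A + B₂) * #X := by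
  obtain ⟨X, hXA, hX, hexp⟩ := exists_subset_expandsBy_card_add_div_card hA (B₁ + B₂)
  refine ⟨X, hXA, hX, ?_⟩
  have := hexp.mul_card_sq_le
  rw [div_mul_eq_mul_div, div_le_iff₀ (by simpa using hX.card_pos), ← add_assoc] at this
  exact_mod_cast this

end Finset

theorem pluennecke_type_inequality_general {G : Type*} [AddCommGroup G] [DecidableEq G]
    (A B₁ B₂ : Finset G) (hA : A.Nonempty)
    (n : ℕ) (K₁ K₂ : ℝ) (hn : A.card = n)
    (h₁ : ((A + B₁).card : ℝ) = K₁ * n) (h₂ : ((A + B₂).card : ℝ) = K₂ * n) :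
    ∃ A' : Finset G, A' ⊆ A ∧ A'.Nonempty ∧
      ((A' + B₁ + B₂).card : ℝ) ≤ K₁ * K₂ * A'.card := by
  obtain ⟨X, hXA, hX, hcard⟩ := exists_subset_card_add_add_mul_card_sq_le hA B₁ B₂
  refine ⟨X, hXA, hX, le_of_mul_le_mul_right (a := (n : ℝ) ^ 2) ?_ ?_⟩
  · have := (Nat.cast_le (α := ℝ)).2 hcard
    push_cast at this
    rw [hn, h₁, h₂] at this
    linarith
  · subst hn
    exact_mod_cast pow_pos hA.card_pos 2

/-- **Lemma 2** (Plünnecke–Ruzsa type inequality). Let `A, B₁, B₂` be finite nonempty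
sets in a commutative group with `|A| = n`, `|A+B₁| = K₁n`, `|A+B₂| = K₂n`. Then
there is a nonempty `A' ⊆ A` such that `|A' + B₁ + B₂| ≤ K₁K₂|A'|`. -/
theorem pluennecke_type_inequality {G : Type*} [AddCommGroup G] [DecidableEq G]
    (A B₁ B₂ : Finset G) (hA : A.Nonempty) (hB₁ : B₁.Nonempty) (hB₂ : B₂.Nonempty)
    (n : ℕ) (K₁ K₂ : ℝ) (hn : A.card = n)
    (h₁ : ((A + B₁).card : ℝ) = K₁ * n) (h₂ : ((A + B₂).card : ℝ) = K₂ * n) :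
    ∃ A' : Finset G, A' ⊆ A ∧ A'.Nonempty ∧
      ((A' + B₁ + B₂).card : ℝ) ≤ K₁ * K₂ * A'.card :=
  pluennecke_type_inequality_general A B₁ B₂ hA n K₁ K₂ hn h₁ h₂
end

section
/- Let A be a finite nonempty set in a commutative group with |A| = n, and assume min(|A + A|, |A − A|) ≤ Kn. Then there is a set T ⊆ A + A with |T| ≤ 2K² − 1 such that for every positive integer m we have (m+1)(A − A) ⊆ A − A + m(T − T). -/
/-!
Let `B = A` if `|A + A| ≤ K|A|` and `B = -A` otherwise. A nonempty `X ⊆ A` minimising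
`|X + B| / |X|` satisfies `|X + B + B| ≤ K² |X|` by the Plünnecke–Petridis inequality; replacing
`X` by `-X` in the second case gives `|A + A + X| ≤ K² |X|` with `X - X ⊆ A - A`.
Take `T ⊆ A + A` maximal with `(|T| + 1) |X| ≤ 2 |T + X|`. By maximality, for every `s ∈ A + A`
more than half of the translate `s + X` lies in `T + X`; so for `s, s' ∈ A + A` these majorities
meet, which puts `s - s'` in `(X - X) + (T - T)`. Thus `2(A - A) ⊆ A - A + (T - T)`, and this
inclusion iterates.
-/

open Pointwise

/-- `iterSumset m B` is the `m`-fold iterated sumset `B + B + ⋯ + B` (with the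
convention that the `0`-fold sumset is `{0}`). -/
def iterSumset {G : Type*} [AddCommGroup G] [DecidableEq G] : ℕ → Finset G → Finset G
  | 0, _ => {0}
  | n + 1, B => B + iterSumset n B

open Finset

section

variable {G : Type*} [AddCommGroup G] [DecidableEq G]

theorem exists_subset_min_card_add_ratio {A : Finset G} (B : Finset G) (hA : A.Nonempty) :
    ∃ X ⊆ A, X.Nonempty ∧ #(X + B) * #A ≤ #(A + B) * #X ∧
      ∀ X' ⊆ X, #(X + B) * #X' ≤ #(X' + B) * #X := by
  have hA' : A ∈ A.powerset.erase ∅ := mem_erase_of_ne_of_mem hA.ne_empty (mem_powerset_self _)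
  obtain ⟨X, hX, hmin⟩ :=
    exists_min_image (A.powerset.erase ∅) (fun U ↦ (#(U + B) : ℚ) / #U) ⟨A, hA'⟩
  rw [mem_erase, mem_powerset, ← nonempty_iff_ne_empty] at hX
  have hX0 : (0 : ℚ) < #X := by exact_mod_cast hX.1.card_pos
  have hratio : ∀ X' ⊆ A, X'.Nonempty → #(X + B) * #X' ≤ #(X' + B) * #X := fun X' hX'A hX' ↦ by
    have := hmin X' (mem_erase_of_ne_of_mem hX'.ne_empty (mem_powerset.2 hX'A))
    rw [div_le_div_iff₀ hX0 (by exact_mod_cast hX'.card_pos)] at this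
    exact_mod_cast this
  refine ⟨X, hX.2, hX.1, hratio A subset_rfl hA, fun X' hX' ↦ ?_⟩
  obtain rfl | hX'ne := X'.eq_empty_or_nonempty
  · simp
  exact hratio X' (hX'.trans hX.2) hX'ne

theorem exists_subset_card_add_add_le_sq {A B : Finset G} {K : ℝ} (hA : A.Nonempty)
    (hAB : (#(A + B) : ℝ) ≤ K * #A) :
    ∃ X ⊆ A, X.Nonempty ∧ (#(X + B + B) : ℝ) ≤ K ^ 2 * #X := by
  obtain ⟨X, hXA, hX, hXratio, hXmin⟩ := exists_subset_min_card_add_ratio B hA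
  have hA0 : (0 : ℝ) < #A := by exact_mod_cast hA.card_pos
  have hX0 : (0 : ℝ) < #X := by exact_mod_cast hX.card_pos
  have hXB : (#(X + B) : ℝ) ≤ K * #X := by
    refine le_of_mul_le_mul_right ?_ hA0
    calc (#(X + B) : ℝ) * #A ≤ #(A + B) * #X := by exact_mod_cast hXratio
      _ ≤ K * #A * #X := mul_le_mul_of_nonneg_right hAB hX0.le
      _ = K * #X * #A := by ring
  have hpet : (#(X + B + B) : ℝ) * #X ≤ #(X + B) * #(X + B) := by
    have := pluennecke_petridis_inequality_add B hXmin
    rw [add_comm B X] at this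
    exact_mod_cast this
  refine ⟨X, hXA, hX, le_of_mul_le_mul_right ?_ hX0⟩
  calc (#(X + B + B) : ℝ) * #X ≤ #(X + B) * #(X + B) := hpet
    _ ≤ (K * #X) * (K * #X) := mul_self_le_mul_self (by positivity) hXB
    _ = K ^ 2 * #X * #X := by ring

theorem exists_sub_subset_card_add_add_le_sq {A : Finset G} {K : ℝ} (hA : A.Nonempty)
    (hK : (#(A + A) : ℝ) ≤ K * #A ∨ (#(A - A) : ℝ) ≤ K * #A) :
    ∃ X : Finset G, X.Nonempty ∧ X - X ⊆ A - A ∧ (#(A + A + X) : ℝ) ≤ K ^ 2 * #X := by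
  rcases hK with hK | hK
  · obtain ⟨X, hXA, hX, hXcard⟩ := exists_subset_card_add_add_le_sq hA hK
    refine ⟨X, hX, sub_subset_sub hXA hXA, ?_⟩
    rwa [add_comm, ← add_assoc]
  · rw [sub_eq_add_neg] at hK
    obtain ⟨X, hXA, hX, hXcard⟩ := exists_subset_card_add_add_le_sq hA hK
    refine ⟨-X, hX.neg, by rw [neg_sub_neg]; exact sub_subset_sub hXA hXA, ?_⟩
    have hneg : A + A + -X = -(X + -A + -A) := by
      simp only [neg_add, neg_neg]
      rw [add_comm, ← add_assoc]
    rwa [hneg, card_neg, card_neg]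

theorem card_insert_add_add_card_filter (s : G) (T X : Finset G) :
    #(insert s T + X) + #{x ∈ X | s + x ∈ T + X} = #X + #(T + X) := by
  have hinter : ({s} + X) ∩ (T + X) = {x ∈ X | s + x ∈ T + X}.image (s + ·) := by
    rw [← filter_mem_eq_inter, singleton_add, ← image_vadd, filter_image]
    rfl
  calc #(insert s T + X) + #{x ∈ X | s + x ∈ T + X}
      = #(({s} + X) ∪ (T + X)) + #(({s} + X) ∩ (T + X)) := by
        rw [insert_eq, union_add, hinter, card_image_of_injective _ (add_right_injective s)]
    _ = #X + #(T + X) := by rw [card_union_add_card_inter, card_singleton_add]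

theorem exists_subset_majority_covered {S X : Finset G} (hS : S.Nonempty) (hX : X.Nonempty) :
    ∃ T ⊆ S, (#T + 1) * #X ≤ 2 * #(T + X) ∧
      ∀ s ∈ S, #X < 2 * #{x ∈ X | s + x ∈ T + X} := by
  set 𝒯 := S.powerset.filter (fun T ↦ (#T + 1) * #X ≤ 2 * #(T + X))
  obtain ⟨s₀, hs₀⟩ := hS
  have hs₀𝒯 : {s₀} ∈ 𝒯 := by
    rw [mem_filter, mem_powerset, card_singleton, card_singleton_add]
    exact ⟨singleton_subset_iff.2 hs₀, le_rfl⟩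
  obtain ⟨T, hT, hTmax⟩ := exists_max_image 𝒯 card ⟨_, hs₀𝒯⟩
  rw [mem_filter, mem_powerset] at hT
  refine ⟨T, hT.1, hT.2, fun s hs ↦ ?_⟩
  by_contra! hminority
  have hsT : s ∉ T := by
    intro hsT
    rw [filter_true_of_mem fun x hx ↦ add_mem_add hsT hx] at hminority
    have := hX.card_pos
    omega
  have hins : insert s T ∈ 𝒯 := by
    rw [mem_filter, mem_powerset, card_insert_of_notMem hsT]
    refine ⟨insert_subset hs hT.1, ?_⟩
    linarith [card_insert_add_add_card_filter s T X, hT.2]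
  have := hTmax _ hins
  rw [card_insert_of_notMem hsT] at this
  omega

theorem sub_subset_sub_add_sub_of_majority_covered {S T X : Finset G}
    (hmaj : ∀ s ∈ S, #X < 2 * #{x ∈ X | s + x ∈ T + X}) : S - S ⊆ (X - X) + (T - T) := by
  intro z hz
  obtain ⟨s, hs, s', hs', rfl⟩ := mem_sub.1 hz
  obtain ⟨x, hx⟩ := inter_nonempty_of_card_lt_card_add_card
    (filter_subset (fun x ↦ s + x ∈ T + X) X) (filter_subset (fun x ↦ s' + x ∈ T + X) X)
    (by linarith [hmaj s hs, hmaj s' hs'])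
  simp only [mem_inter, mem_filter, mem_add] at hx
  obtain ⟨⟨-, t, ht, y, hy, hty⟩, -, t', ht', y', hy', hty'⟩ := hx
  obtain rfl := eq_sub_of_add_eq hty.symm
  obtain rfl := eq_sub_of_add_eq hty'.symm
  exact mem_add.2 ⟨y - y', sub_mem_sub hy hy', t - t', sub_mem_sub ht ht', by abel⟩

theorem exists_subset_card_le_sub_subset_add_sub {S X : Finset G} {L : ℝ} (hS : S.Nonempty)
    (hX : X.Nonempty) (hSX : (#(S + X) : ℝ) ≤ L * #X) :
    ∃ T ⊆ S, (#T : ℝ) ≤ 2 * L - 1 ∧ S - S ⊆ (X - X) + (T - T) := by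
  obtain ⟨T, hTS, hTX, hmaj⟩ := exists_subset_majority_covered hS hX
  refine ⟨T, hTS, ?_, sub_subset_sub_add_sub_of_majority_covered hmaj⟩
  have hX0 : (0 : ℝ) < #X := by exact_mod_cast hX.card_pos
  have hTXS : (#(T + X) : ℝ) ≤ #(S + X) := by
    exact_mod_cast card_le_card (add_subset_add_right hTS)
  have : ((#T : ℝ) + 1) * #X ≤ 2 * L * #X :=
    calc ((#T : ℝ) + 1) * #X ≤ 2 * #(T + X) := by exact_mod_cast hTX
      _ ≤ 2 * L * #X := by linarith
  linarith [le_of_mul_le_mul_right this hX0]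

theorem iterSumset_succ_subset_add {D E : Finset G} (h : D + D ⊆ D + E) :
    ∀ m, iterSumset (m + 1) D ⊆ D + iterSumset m E
  | 0 => subset_rfl
  | m + 1 =>
    calc iterSumset (m + 2) D = D + iterSumset (m + 1) D := rfl
      _ ⊆ D + (D + iterSumset m E) := add_subset_add_left (iterSumset_succ_subset_add h m)
      _ = D + D + iterSumset m E := (add_assoc _ _ _).symm
      _ ⊆ D + E + iterSumset m E := add_subset_add_right h
      _ = D + iterSumset (m + 1) E := add_assoc _ _ _

end

/-- **Lemma 3** (Green–Ruzsa). Let `A` be a finite nonempty set in a commutative group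
with `|A| = n` and `min(|A+A|, |A−A|) ≤ Kn`. Then there is `T ⊆ A + A` with
`|T| ≤ 2K² − 1` such that for every positive integer `m`,
`(m+1)(A − A) ⊆ A − A + m(T − T)`. -/
theorem iterated_covering_lemma {G : Type*} [AddCommGroup G] [DecidableEq G]
    (A : Finset G) (hA : A.Nonempty) (n : ℕ) (K : ℝ) (hn : A.card = n)
    (hK : (min (A + A).card (A - A).card : ℝ) ≤ K * n) :
    ∃ T : Finset G, T ⊆ A + A ∧ (T.card : ℝ) ≤ 2 * K ^ 2 - 1 ∧
      ∀ m : ℕ, 0 < m →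
        iterSumset (m + 1) (A - A) ⊆ (A - A) + iterSumset m (T - T) := by
  subst hn
  obtain ⟨X, hX, hXA, hXcard⟩ := exists_sub_subset_card_add_add_le_sq hA (min_le_iff.1 hK)
  obtain ⟨T, hTA, hTcard, hcover⟩ :=
    exists_subset_card_le_sub_subset_add_sub (hA.add hA) hX hXcard
  refine ⟨T, hTA, hTcard, fun m _ ↦ iterSumset_succ_subset_add ?_ m⟩
  calc (A - A) + (A - A) = (A + A) - (A + A) := (add_sub_add_comm _ _ _ _).symm
    _ ⊆ (X - X) + (T - T) := hcover
    _ ⊆ (A - A) + (T - T) := add_subset_add_right hXA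
end

section
/- Let B be a finite set in a commutative group that is k-covering. Then for every positive integer m, |(m+1)B| ≤ |B| · J(k, m), where J(k, m) denotes the number of k-tuples of integers (x₁, …, x_k) satisfying Σᵢ xᵢ⁺ = Σᵢ xᵢ⁻ ≤ m (here x⁺ = max(x, 0) and x⁻ = max(−x, 0)). -/
open Pointwise

/-- `J k m` is the number of `k`-tuples of integers `(x₁, …, x_k)` with
`∑ᵢ xᵢ⁺ = ∑ᵢ xᵢ⁻ ≤ m`, where `x⁺ = max(x,0)` and `x⁻ = max(−x,0)`. -/
noncomputable def J (k m : ℕ) : ℕ :=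
  Nat.card {x : Fin k → ℤ //
    (∑ i, max (x i) 0) = (∑ i, max (-(x i)) 0) ∧ (∑ i, max (x i) 0) ≤ m}

/-!
Enumerate `T` as `t : Fin k → G`. By induction on `n`, every element of `(n+1)B` has the form
`b + ∑ xᵢ tᵢ` with `b ∈ B` and `x ∈ ℤᵏ` of zero sum with `∑ xᵢ⁺ ≤ n`: adding a further
`a ∈ B`, the covering property rewrites `a + b` as `c + (tᵢ - tⱼ)` with `c ∈ B`, which replaces
`x` by `x + eᵢ - eⱼ` and raises `∑ xᵢ⁺` by at most one. So `(m+1)B` is the image of `B` times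
the set of these `x`, and that set has `J(k, m)` elements because `∑ xᵢ = ∑ xᵢ⁺ - ∑ xᵢ⁻`.
-/

open Finset

lemma posPart_add_sub_le {α : Type*} [Lattice α] [AddCommGroup α] [IsOrderedAddMonoid α]
    (a : α) {b c : α} (hb : 0 ≤ b) (hc : 0 ≤ c) : (a + b - c)⁺ ≤ a⁺ + b :=
  sup_le ((sub_le_self _ hc).trans (add_le_add_left (le_posPart a) b))
    (add_nonneg (posPart_nonneg a) hb)

section Balanced

variable {ι : Type*} [Fintype ι]

lemma sum_negPart_eq_sum_posPart_iff (x : ι → ℤ) :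
    ∑ i, (x i)⁻ = ∑ i, (x i)⁺ ↔ ∑ i, x i = 0 := by
  have h : ∑ i, x i = ∑ i, (x i)⁺ - ∑ i, (x i)⁻ := by
    simp only [← sum_sub_distrib, posPart_sub_negPart]
  omega

variable [DecidableEq ι]

-- The box `Icc (-n) n` is implied by the other two conditions (`mem_balancedVectors`);
-- it is there to make the set finite.
variable (ι) in
noncomputable def balancedVectors (n : ℕ) : Finset (ι → ℤ) :=
  (Icc (-(n : ι → ℤ)) n).filter fun x => ∑ i, x i = 0 ∧ ∑ i, (x i)⁺ ≤ n

lemma mem_balancedVectors {n : ℕ} {x : ι → ℤ} :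
    x ∈ balancedVectors ι n ↔ ∑ i, x i = 0 ∧ ∑ i, (x i)⁺ ≤ n := by
  refine ⟨fun hx => (mem_filter.1 hx).2, fun hx => mem_filter.2 ⟨?_, hx⟩⟩
  obtain ⟨hsum, hpos⟩ := hx
  have hneg := (sum_negPart_eq_sum_posPart_iff x).2 hsum
  refine mem_Icc.2 ⟨fun i => ?_, fun i => ?_⟩
  · have := single_le_sum (fun j _ => negPart_nonneg (x j)) (mem_univ i)
    simp only [Pi.neg_apply, Pi.natCast_apply]
    linarith [neg_le_negPart (x i)]
  · have := single_le_sum (fun j _ => posPart_nonneg (x j)) (mem_univ i)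
    simp only [Pi.natCast_apply]
    linarith [le_posPart (x i)]

lemma add_single_sub_single_mem_balancedVectors {n : ℕ} {x : ι → ℤ}
    (hx : x ∈ balancedVectors ι n) (i j : ι) :
    x + Pi.single i 1 - Pi.single j 1 ∈ balancedVectors ι (n + 1) := by
  obtain ⟨hsum, hpos⟩ := mem_balancedVectors.1 hx
  have hsingle (i l : ι) : 0 ≤ (Pi.single i 1 : ι → ℤ) l := by
    rw [Pi.single_apply]; split_ifs <;> norm_num
  refine mem_balancedVectors.2 ⟨by simp [sum_add_distrib, sum_sub_distrib, hsum], ?_⟩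
  calc ∑ l, ((x + Pi.single i 1 - Pi.single j 1 : ι → ℤ) l)⁺
      ≤ ∑ l, ((x l)⁺ + (Pi.single i 1 : ι → ℤ) l) :=
        sum_le_sum fun l _ => posPart_add_sub_le _ (hsingle i l) (hsingle j l)
    _ = ∑ l, (x l)⁺ + 1 := by simp [sum_add_distrib]
    _ ≤ ((n + 1 : ℕ) : ℤ) := by push_cast; linarith

lemma card_balancedVectors (k m : ℕ) : #(balancedVectors (Fin k) m) = J k m := by
  rw [J, ← Nat.card_eq_finsetCard]
  refine Nat.card_congr (Equiv.subtypeEquivRight fun x => ?_)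
  rw [mem_balancedVectors, ← sum_negPart_eq_sum_posPart_iff]
  exact and_congr eq_comm Iff.rfl

end Balanced

theorem iterSumset_succ_subset_image₂ {G ι : Type*} [AddCommGroup G] [DecidableEq G] [Fintype ι]
    [DecidableEq ι] {B T : Finset G} {t : ι → G} (hBT : B + B ⊆ B + (T - T))
    (ht : (T : Set G) ⊆ Set.range t) (n : ℕ) :
    iterSumset (n + 1) B ⊆
      image₂ (fun b x => b + Fintype.linearCombination ℤ t x) B (balancedVectors ι n) := by
  induction n with
  | zero =>
    intro g hg
    rw [iterSumset, iterSumset, singleton_zero, add_zero] at hg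
    exact mem_image₂.2 ⟨g, hg, 0, by simp [mem_balancedVectors], by simp⟩
  | succ n ih =>
    intro g hg
    obtain ⟨a, ha, _, hg', rfl⟩ := mem_add.1 hg
    obtain ⟨b, hb, x, hx, rfl⟩ := mem_image₂.1 (ih hg')
    obtain ⟨c, hc, _, hd, hcd⟩ := mem_add.1 (hBT (add_mem_add ha hb))
    obtain ⟨_, hu, _, hv, rfl⟩ := mem_sub.1 hd
    obtain ⟨i, rfl⟩ := ht hu
    obtain ⟨j, rfl⟩ := ht hv
    refine mem_image₂.2 ⟨c, hc, _, add_single_sub_single_mem_balancedVectors hx i j, ?_⟩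
    simp only [map_sub, map_add, Fintype.linearCombination_apply_single, one_smul]
    rw [← add_assoc a, ← hcd]
    abel

/-- **Lemma 4** (Green–Ruzsa). Let `B` be a finite `k`-covering set in a commutative
group. Then for every positive integer `m`, `|(m+1)B| ≤ |B| · J(k, m)`. -/
theorem card_iterated_sumset_le_of_covering {G : Type*} [AddCommGroup G] [DecidableEq G]
    (B : Finset G) (k : ℕ)
    (hcov : ∃ T : Finset G, T.card = k ∧ B + B ⊆ B + (T - T)) :
    ∀ m : ℕ, 0 < m → (iterSumset (m + 1) B).card ≤ B.card * J k m := by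
  obtain ⟨T, rfl, hBT⟩ := hcov
  intro m _
  have ht : (T : Set G) ⊆ Set.range fun i => (T.equivFin.symm i : G) :=
    fun u hu => ⟨T.equivFin ⟨u, hu⟩, by simp⟩
  calc #(iterSumset (m + 1) B)
      ≤ #(image₂ _ B (balancedVectors (Fin #T) m)) :=
        card_le_card (iterSumset_succ_subset_image₂ hBT ht m)
    _ ≤ #B * #(balancedVectors (Fin #T) m) := card_image₂_le _ _ _
    _ = #B * J #T m := by rw [card_balancedVectors]
end

section
/- For all positive integers k and m with m ≥ k, one has J(k, m) < (14m/k)^k, where J(k, m) denotes the number of k-tuples of integers (x₁, …, x_k) satisfying Σᵢ xᵢ⁺ = Σᵢ xᵢ⁻ ≤ m (here x⁺ = max(x, 0) and x⁻ = max(−x, 0)). -/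
/-- Encoding of an integer as a natural number. -/
def JEnc (z : ℤ) : ℕ := (2 * z - 1).toNat + (-(2 * z)).toNat

lemma JEnc_inj : Function.Injective JEnc := by
  intro a b h
  unfold JEnc at h
  omega

lemma JEnc_le (z : ℤ) : (JEnc z : ℤ) ≤ 2 * max z 0 + 2 * max (-z) 0 := by
  unfold JEnc
  rcases le_total z 0 with h | h
  · rw [max_eq_right h, max_eq_left (by linarith)]
    push_cast
    omega
  · rw [max_eq_left h, max_eq_right (by linarith)]
    push_cast
    omega

/-- Encoding of a tuple of naturals as a multiset. -/
def JTup (k N : ℕ) (y : Fin k → ℕ) : Multiset (Fin (k + 1)) :=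
  (∑ i : Fin k, Multiset.replicate (y i) i.castSucc)
    + Multiset.replicate (N - ∑ i, y i) (Fin.last k)

lemma JTup_count (k N : ℕ) (y : Fin k → ℕ) (i : Fin k) :
    (JTup k N y).count i.castSucc = y i := by
  unfold JTup
  rw [Multiset.count_add, Multiset.count_sum']
  simp [Multiset.count_replicate, Fin.castSucc_inj, (Fin.castSucc_lt_last i).ne']

lemma JTup_card (k N : ℕ) (y : Fin k → ℕ) (h : ∑ i, y i ≤ N) :
    Multiset.card (JTup k N y) = N := by
  have key : ∀ s : Finset (Fin k),
      Multiset.card (∑ i ∈ s, Multiset.replicate (y i) i.castSucc) = ∑ i ∈ s, y i := by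
    intro s
    induction s using Finset.cons_induction with
    | empty => simp
    | cons a s ha ih => simp [Finset.sum_cons, ih]
  unfold JTup
  rw [Multiset.card_add, Multiset.card_replicate, key]
  omega

lemma sum_JEnc_le {k m : ℕ} (x : Fin k → ℤ)
    (h1 : (∑ i, max (x i) 0) = (∑ i, max (-(x i)) 0))
    (h2 : (∑ i, max (x i) 0) ≤ (m : ℤ)) :
    ∑ i, JEnc (x i) ≤ 4 * m := by
  have h : ((∑ i, JEnc (x i) : ℕ) : ℤ) ≤ ((4 * m : ℕ) : ℤ) := by
    push_cast
    calc (∑ i, (JEnc (x i) : ℤ))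
        ≤ ∑ i, (2 * max (x i) 0 + 2 * max (-(x i)) 0) :=
          Finset.sum_le_sum fun i _ => JEnc_le (x i)
      _ = 2 * (∑ i, max (x i) 0) + 2 * (∑ i, max (-(x i)) 0) := by
          rw [Finset.sum_add_distrib, Finset.mul_sum, Finset.mul_sum]
      _ ≤ 4 * (m : ℤ) := by rw [← h1]; linarith
  exact_mod_cast h

lemma J_le_choose (k m : ℕ) : J k m ≤ (4 * m + k).choose k := by
  classical
  set T := {x : Fin k → ℤ //
    (∑ i, max (x i) 0) = (∑ i, max (-(x i)) 0) ∧ (∑ i, max (x i) 0) ≤ (m : ℤ)} with hT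
  have hΦ : ∀ x : T, Multiset.card (JTup k (4 * m) (fun i => JEnc (x.1 i))) = 4 * m :=
    fun x => JTup_card _ _ _ (sum_JEnc_le x.1 x.2.1 x.2.2)
  let Φ : T → Sym (Fin (k + 1)) (4 * m) := fun x => ⟨_, hΦ x⟩
  have hinj : Function.Injective Φ := by
    intro a b h
    have hval : JTup k (4 * m) (fun i => JEnc (a.1 i))
        = JTup k (4 * m) (fun i => JEnc (b.1 i)) := congrArg Subtype.val h
    refine Subtype.ext (funext fun i => JEnc_inj ?_)
    have := congrArg (Multiset.count i.castSucc) hval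
    rwa [JTup_count, JTup_count] at this
  have hle : Nat.card T ≤ Nat.card (Sym (Fin (k + 1)) (4 * m)) :=
    Nat.card_le_card_of_injective Φ hinj
  have hcard : Nat.card (Sym (Fin (k + 1)) (4 * m)) = (4 * m + k).choose k := by
    rw [Nat.card_eq_fintype_card, Sym.card_sym_eq_choose, Fintype.card_fin]
    rw [show k + 1 + 4 * m - 1 = 4 * m + k by omega]
    have := Nat.choose_symm (Nat.le_add_left k (4 * m))
    rwa [Nat.add_sub_cancel] at this
  calc J k m = Nat.card T := rfl
    _ ≤ _ := hle.trans_eq hcard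

lemma pow_lt_exp_mul_factorial : ∀ k : ℕ, 1 ≤ k →
    (k : ℝ) ^ k < Real.exp 1 ^ k * k.factorial := by
  intro k hk
  induction k with
  | zero => omega
  | succ n ih =>
    rcases Nat.eq_zero_or_pos n with h0 | hn
    · subst h0
      have := Real.exp_one_gt_d9
      norm_num
      try linarith
    · have ih' := ih hn
      have hn0 : (0 : ℝ) < n := by exact_mod_cast hn
      have key : ((n : ℝ) + 1) ^ n ≤ (n : ℝ) ^ n * Real.exp 1 := by
        have h1 : (1 / (n : ℝ) + 1) ^ n ≤ Real.exp 1 := by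
          calc (1 / (n : ℝ) + 1) ^ n
              ≤ Real.exp (1 / (n : ℝ)) ^ n := by
                apply pow_le_pow_left₀ (by positivity)
                linarith [Real.add_one_le_exp (1 / (n : ℝ))]
            _ = Real.exp 1 := by
                rw [← Real.exp_nat_mul]
                congr 1
                field_simp
        have h3 : ((n : ℝ) + 1) ^ n = (n : ℝ) ^ n * (1 / (n : ℝ) + 1) ^ n := by
          rw [← mul_pow]
          congr 1
          field_simp
          ring
        calc ((n : ℝ) + 1) ^ n = (n : ℝ) ^ n * (1 / (n : ℝ) + 1) ^ n := h3
          _ ≤ (n : ℝ) ^ n * Real.exp 1 := mul_le_mul_of_nonneg_left h1 (by positivity)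
      have hexp : (0 : ℝ) < Real.exp 1 := Real.exp_pos 1
      have hen : (0 : ℝ) < Real.exp 1 ^ n := pow_pos hexp n
      have hfact : (0 : ℝ) < (n.factorial : ℝ) := by exact_mod_cast n.factorial_pos
      have step : ((n : ℝ) + 1) ^ (n + 1) < Real.exp 1 ^ (n + 1) * ((n + 1) * n.factorial) := by
        calc ((n : ℝ) + 1) ^ (n + 1) = ((n : ℝ) + 1) * ((n : ℝ) + 1) ^ n := by ring
          _ ≤ ((n : ℝ) + 1) * ((n : ℝ) ^ n * Real.exp 1) := by
              apply mul_le_mul_of_nonneg_left key (by positivity)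
          _ < ((n : ℝ) + 1) * ((Real.exp 1 ^ n * n.factorial) * Real.exp 1) := by
              apply mul_lt_mul_of_pos_left _ (by positivity)
              apply mul_lt_mul_of_pos_right ih' hexp
          _ = Real.exp 1 ^ (n + 1) * ((n + 1) * n.factorial) := by ring
      push_cast [Nat.factorial_succ]
      linarith [step]

/-- **Lemma 5** (Green–Ruzsa). For positive integers `k ≤ m`, `J(k, m) < (14m/k)^k`. -/
theorem J_lt (k m : ℕ) (hk : 0 < k) (hm : k ≤ m) :
    (J k m : ℝ) < (14 * m / k) ^ k := by
  have hm0 : 0 < m := lt_of_lt_of_le hk hm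
  have hkR : (0 : ℝ) < k := by exact_mod_cast hk
  have hmR : (0 : ℝ) < m := by exact_mod_cast hm0
  have hfact : (0 : ℝ) < (k.factorial : ℝ) := by exact_mod_cast k.factorial_pos
  have hkk : (0 : ℝ) < (k : ℝ) ^ k := pow_pos hkR k
  have h5m : (0 : ℝ) < (5 * (m : ℝ)) ^ k := by positivity
  -- Step 1: J ≤ choose
  have h1 : (J k m : ℝ) ≤ ((4 * m + k).choose k : ℝ) := by
    exact_mod_cast J_le_choose k m
  -- Step 2: choose * k! ≤ (5m)^k
  have h2 : ((4 * m + k).choose k : ℝ) * (k.factorial : ℝ) ≤ (5 * (m : ℝ)) ^ k := by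
    have hnat : (4 * m + k).choose k * k.factorial ≤ (5 * m) ^ k := by
      calc (4 * m + k).choose k * k.factorial = (4 * m + k).descFactorial k := by
            rw [Nat.descFactorial_eq_factorial_mul_choose]; ring
        _ ≤ (4 * m + k) ^ k := Nat.descFactorial_le_pow _ _
        _ ≤ (5 * m) ^ k := Nat.pow_le_pow_left (by omega) k
    calc ((4 * m + k).choose k : ℝ) * (k.factorial : ℝ)
        = (((4 * m + k).choose k * k.factorial : ℕ) : ℝ) := by push_cast; ring
      _ ≤ (((5 * m) ^ k : ℕ) : ℝ) := by exact_mod_cast hnat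
      _ = (5 * (m : ℝ)) ^ k := by push_cast; ring
  -- Step 3: k^k < e^k * k!
  have h3 := pow_lt_exp_mul_factorial k hk
  have hexp : (0 : ℝ) < Real.exp 1 := Real.exp_pos 1
  have he : Real.exp 1 < 2.8 := lt_trans Real.exp_one_lt_d9 (by norm_num)
  calc (J k m : ℝ) ≤ ((4 * m + k).choose k : ℝ) := h1
    _ ≤ (5 * (m : ℝ)) ^ k / (k.factorial : ℝ) := by
        rw [le_div_iff₀ hfact]; exact h2
    _ < (5 * (m : ℝ)) ^ k * Real.exp 1 ^ k / (k : ℝ) ^ k := by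
        rw [div_lt_div_iff₀ hfact hkk]
        calc (5 * (m : ℝ)) ^ k * (k : ℝ) ^ k
            < (5 * (m : ℝ)) ^ k * (Real.exp 1 ^ k * k.factorial) :=
              mul_lt_mul_of_pos_left h3 h5m
          _ = (5 * (m : ℝ)) ^ k * Real.exp 1 ^ k * (k.factorial : ℝ) := by ring
    _ ≤ (14 * m / k) ^ k := by
        rw [div_pow, div_le_div_iff₀ hkk hkk]
        have hb : (5 * (m : ℝ)) * Real.exp 1 ≤ 14 * m := by nlinarith
        have : ((5 * (m : ℝ)) * Real.exp 1) ^ k ≤ (14 * (m : ℝ)) ^ k :=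
          pow_le_pow_left₀ (by positivity) hb k
        rw [mul_pow] at this
        nlinarith [pow_pos hkk k]
end

section
/- For all positive integers k and m with m ≥ k, one has 2^k · C(2m + k, k) < (14m/k)^k, where C(·,·) denotes the binomial coefficient. -/
/-!
Multiply through by `k^k` and induct on `m`, starting from `m = k`. Passing from `m` to `m + 1`
multiplies `C(2m+k, k)` by `(2m+k+1)(2m+k+2) / ((2m+1)(2m+2))` and `m^k` by `(1 + 1/m)^k`; two
applications of Bernoulli's inequality show that the second factor dominates the first. At `m = k`
the claim reads `2^k · C(3k, k) < 14^k`, proved by induction on `k`: each step multiplies the left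
side by `6(3k+1)(3k+2) / ((2k+1)(2k+2)) ≤ 14`.
-/

/-- Bernoulli's inequality `(1 + 1/a)^(k+1) ≥ 1 + (k+1)/a`, cleared of denominators. -/
theorem Nat.pow_mul_add_add_one_le_add_one_pow (a k : ℕ) :
    a ^ k * (a + k + 1) ≤ (a + 1) ^ (k + 1) := by
  induction k with
  | zero => simp
  | succ k ih =>
    calc a ^ (k + 1) * (a + (k + 1) + 1) = a ^ k * (a * (a + k + 2)) := by ring
      _ ≤ a ^ k * ((a + k + 1) * (a + 1)) := Nat.mul_le_mul_left _ (by nlinarith)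
      _ = a ^ k * (a + k + 1) * (a + 1) := by ring
      _ ≤ (a + 1) ^ (k + 1) * (a + 1) := by gcongr
      _ = (a + 1) ^ (k + 1 + 1) := by ring

theorem Nat.pow_mul_add_one_mul_add_two_le (m k : ℕ) :
    m ^ k * ((2 * m + k + 1) * (2 * m + k + 2)) ≤ (m + 1) ^ k * ((2 * m + 1) * (2 * m + 2)) := by
  have h₁ := pow_mul_add_add_one_le_add_one_pow (2 * m) k
  have h₂ := pow_mul_add_add_one_le_add_one_pow (2 * m + 1) k
  rw [show 2 * m + 1 + 1 = 2 * (m + 1) by ring] at h₂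
  have h : (2 * m + 1) ^ k * (2 ^ k * (m ^ k * ((2 * m + k + 1) * (2 * m + k + 2))))
      ≤ (2 * m + 1) ^ k * (2 ^ k * ((m + 1) ^ k * ((2 * m + 1) * (2 * m + 2)))) :=
    calc (2 * m + 1) ^ k * (2 ^ k * (m ^ k * ((2 * m + k + 1) * (2 * m + k + 2))))
        = (2 * m) ^ k * (2 * m + k + 1) * ((2 * m + 1) ^ k * (2 * m + 1 + k + 1)) := by ring
      _ ≤ (2 * m + 1) ^ (k + 1) * (2 * (m + 1)) ^ (k + 1) := Nat.mul_le_mul h₁ h₂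
      _ = (2 * m + 1) ^ k * (2 ^ k * ((m + 1) ^ k * ((2 * m + 1) * (2 * m + 2)))) := by
        rw [mul_pow]; ring
  exact Nat.le_of_mul_le_mul_left (Nat.le_of_mul_le_mul_left h (by positivity)) (by positivity)

theorem Nat.choose_add_two_mul (a k : ℕ) :
    (a + k + 2).choose k * ((a + 1) * (a + 2))
      = (a + k).choose k * ((a + k + 1) * (a + k + 2)) := by
  have h₁ := choose_mul_succ_eq (a + k) k
  have h₂ := choose_mul_succ_eq (a + k + 1) k
  rw [show a + k + 1 - k = a + 1 by omega] at h₁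
  rw [show a + k + 1 + 1 - k = a + 2 by omega] at h₂
  calc (a + k + 2).choose k * ((a + 1) * (a + 2))
      = (a + k + 1 + 1).choose k * (a + 2) * (a + 1) := by ring
    _ = (a + k).choose k * (a + k + 1) * (a + k + 2) := by rw [← h₂, mul_right_comm, ← h₁]
    _ = (a + k).choose k * ((a + k + 1) * (a + k + 2)) := by ring

theorem Nat.choose_three_mul_add_three_mul (k : ℕ) :
    (3 * k + 3).choose (k + 1) * ((2 * k + 1) * (2 * k + 2))
      = 3 * ((3 * k).choose k * ((3 * k + 1) * (3 * k + 2))) := by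
  have h₁ := add_one_mul_choose_eq (3 * k + 2) k
  have h₂ := choose_add_two_mul (2 * k) k
  rw [show 2 * k + k = 3 * k by ring] at h₂
  refine Nat.eq_of_mul_eq_mul_left (Nat.succ_pos k) ?_
  calc (k + 1) * ((3 * k + 3).choose (k + 1) * ((2 * k + 1) * (2 * k + 2)))
      = (3 * k + 2 + 1).choose (k + 1) * (k + 1) * ((2 * k + 1) * (2 * k + 2)) := by ring
    _ = 3 * (k + 1) * ((3 * k + 2).choose k * ((2 * k + 1) * (2 * k + 2))) := by rw [← h₁]; ring
    _ = (k + 1) * (3 * ((3 * k).choose k * ((3 * k + 1) * (3 * k + 2)))) := by rw [h₂]; ring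

theorem Nat.two_pow_mul_choose_three_mul_lt (k : ℕ) (hk : 0 < k) :
    2 ^ k * (3 * k).choose k < 14 ^ k := by
  induction k, hk using Nat.le_induction with
  | base => decide
  | succ k _ ih =>
    have hratio : 6 * ((3 * k + 1) * (3 * k + 2)) ≤ 14 * ((2 * k + 1) * (2 * k + 2)) := by
      nlinarith
    refine Nat.lt_of_mul_lt_mul_right (a := (2 * k + 1) * (2 * k + 2)) ?_
    calc 2 ^ (k + 1) * (3 * (k + 1)).choose (k + 1) * ((2 * k + 1) * (2 * k + 2))
        = 2 ^ k * (3 * k).choose k * (6 * ((3 * k + 1) * (3 * k + 2))) := by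
          rw [mul_assoc, show 3 * (k + 1) = 3 * k + 3 by ring, choose_three_mul_add_three_mul]
          ring
      _ < 14 ^ k * (6 * ((3 * k + 1) * (3 * k + 2))) := by gcongr
      _ ≤ 14 ^ k * (14 * ((2 * k + 1) * (2 * k + 2))) := by gcongr
      _ = 14 ^ (k + 1) * ((2 * k + 1) * (2 * k + 2)) := by ring

theorem Nat.two_pow_mul_choose_mul_pow_lt (k m : ℕ) (hk : 0 < k) (hm : k ≤ m) :
    2 ^ k * (2 * m + k).choose k * k ^ k < (14 * m) ^ k := by
  induction m, hm using Nat.le_induction with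
  | base =>
    rw [show 2 * k + k = 3 * k by ring, mul_pow]
    exact Nat.mul_lt_mul_of_pos_right (two_pow_mul_choose_three_mul_lt k hk) (by positivity)
  | succ m _ ih =>
    refine Nat.lt_of_mul_lt_mul_right (a := (2 * m + 1) * (2 * m + 2)) ?_
    calc 2 ^ k * (2 * (m + 1) + k).choose k * k ^ k * ((2 * m + 1) * (2 * m + 2))
        = 2 ^ k * k ^ k * ((2 * m + k + 2).choose k * ((2 * m + 1) * (2 * m + 2))) := by
          rw [show 2 * (m + 1) + k = 2 * m + k + 2 by ring]; ring
      _ = 2 ^ k * k ^ k * ((2 * m + k).choose k * ((2 * m + k + 1) * (2 * m + k + 2))) := by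
          rw [choose_add_two_mul]
      _ = 2 ^ k * (2 * m + k).choose k * k ^ k * ((2 * m + k + 1) * (2 * m + k + 2)) := by ring
      _ < (14 * m) ^ k * ((2 * m + k + 1) * (2 * m + k + 2)) := by gcongr
      _ = 14 ^ k * (m ^ k * ((2 * m + k + 1) * (2 * m + k + 2))) := by ring
      _ ≤ 14 ^ k * ((m + 1) ^ k * ((2 * m + 1) * (2 * m + 2))) :=
          Nat.mul_le_mul_left _ (pow_mul_add_one_mul_add_two_le m k)
      _ = (14 * (m + 1)) ^ k * ((2 * m + 1) * (2 * m + 2)) := by rw [mul_pow]; ring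

/-- For positive integers `k ≤ m` one has `2^k · C(2m+k, k) < (14m/k)^k`. -/
theorem two_pow_mul_choose_lt (k m : ℕ) (hk : 0 < k) (hm : k ≤ m) :
    ((2 ^ k * (2 * m + k).choose k : ℕ) : ℝ) < (14 * m / k) ^ k := by
  rw [div_pow, lt_div_iff₀ (by positivity)]
  exact_mod_cast Nat.two_pow_mul_choose_mul_pow_lt k m hk hm
end

section
/- For every real t with 0 ≤ t ≤ 1, one has (2 + t)^(2+t) ≤ 4 · 7^t. -/
/-- For every real `t` with `0 ≤ t ≤ 1`, one has `(2+t)^(2+t) ≤ 4 · 7^t`. -/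
theorem rpow_ineq (t : ℝ) (h0 : 0 ≤ t) (h1 : t ≤ 1) :
    (2 + t) ^ (2 + t) ≤ 4 * (7 : ℝ) ^ t := by
  have hpos : (0:ℝ) < 2 + t := by linarith
  have hconv := Real.convexOn_mul_log.2 (x := 2) (y := 3)
    (by norm_num : (2:ℝ) ∈ Set.Ici (0:ℝ)) (by norm_num : (3:ℝ) ∈ Set.Ici (0:ℝ))
    (by linarith : (0:ℝ) ≤ 1 - t) h0 (by ring)
  have hcomb : (1 - t) • (2:ℝ) + t • (3:ℝ) = 2 + t := by
    simp [smul_eq_mul]; ring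
  rw [hcomb] at hconv
  simp only [smul_eq_mul] at hconv
  -- hconv : (2+t) * log (2+t) ≤ (1-t) * (2 * log 2) + t * (3 * log 3)
  have hlog : (2 + t) * Real.log (2 + t) ≤ Real.log 4 + t * Real.log 7 := by
    have h27 : Real.log 27 ≤ Real.log 28 := Real.log_le_log (by norm_num) (by norm_num)
    have e27 : Real.log 27 = 3 * Real.log 3 := by
      rw [show (27:ℝ) = 3 ^ (3:ℕ) by norm_num, Real.log_pow]; push_cast; ring
    have e28 : Real.log 28 = Real.log 4 + Real.log 7 := by
      rw [show (28:ℝ) = 4 * 7 by norm_num, Real.log_mul (by norm_num) (by norm_num)]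
    have e4 : Real.log 4 = 2 * Real.log 2 := by
      rw [show (4:ℝ) = 2 ^ (2:ℕ) by norm_num, Real.log_pow]; push_cast; ring
    nlinarith [hconv, mul_le_mul_of_nonneg_left (e27 ▸ e28 ▸ h27) h0]
  calc (2 + t) ^ (2 + t) = Real.exp ((2 + t) * Real.log (2 + t)) := by
        rw [Real.rpow_def_of_pos hpos]; ring_nf
    _ ≤ Real.exp (Real.log 4 + t * Real.log 7) := Real.exp_le_exp.2 hlog
    _ = 4 * (7:ℝ) ^ t := by
        rw [Real.exp_add, Real.exp_log (by norm_num), Real.rpow_def_of_pos (by norm_num : (0:ℝ)<7)]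
        ring_nf
end

section
/- Let N be a prime and let A ⊆ ℤ/Nℤ be a set of size n. Suppose there exist b ∈ ℤ/Nℤ and an integer l < N/3 such that the number of elements of A − A lying outside the interval {b, b+1, …, b+l} is less than n/2. Then there exists a ∈ ℤ/Nℤ such that A ⊆ {a, a+1, …, a+l}. -/
/-!
If fewer than `n / 2` differences fall outside the interval `I`, then for every `c ∈ A` more
than half of `A - c` lies in `I`. Two such halves meet, so every difference of `A` is a
difference of two elements of `I`, i.e. an integer in `[-l, l]`. Writing each element of `A`
as `a₀ + g` with `|g| ≤ l` for a fixed `a₀ ∈ A` and starting at the element with least `g`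
puts `A` in `[a, a + 2l]`; since `3l < N`, a difference lying in `[0, 2l]` and, modulo `N`,
in `[-l, l]` lies in `[0, l]`.
-/

open Finset Pointwise

section AddCommGroup

variable {G : Type*} [AddCommGroup G] [DecidableEq G]

theorem card_filter_sub_notMem_le_card_sdiff {A : Finset G} (I : Finset G) {c : G} (hc : c ∈ A) :
    #{x ∈ A | x - c ∉ I} ≤ #((A - A) \ I) := by
  refine card_le_card_of_injOn (· - c) (fun x hx => ?_) (fun x _ y _ hxy => sub_left_injective hxy)
  simp only [coe_filter, Set.mem_ofPred_eq] at hx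
  simp only [coe_sdiff, Set.mem_sdiff, mem_coe]
  exact ⟨sub_mem_sub hx.1 hc, hx.2⟩

theorem sub_subset_sub_of_two_mul_card_sdiff_lt {A I : Finset G} (h : 2 * #((A - A) \ I) < #A) :
    A - A ⊆ I - I := by
  intro d hd
  obtain ⟨a, ha, a', ha', rfl⟩ := mem_sub.mp hd
  have hmost : ∀ c ∈ A, #A < 2 * #{x ∈ A | x - c ∈ I} := fun c hc => by
    have := card_filter_add_card_filter_not (s := A) (fun x => x - c ∈ I)
    have := card_filter_sub_notMem_le_card_sdiff I hc
    omega
  obtain ⟨x, hx⟩ := inter_nonempty_of_card_lt_card_add_card (filter_subset (· - a ∈ I) A)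
    (filter_subset (· - a' ∈ I) A) (by linarith [hmost a ha, hmost a' ha'])
  simp only [mem_inter, mem_filter] at hx
  exact mem_sub.mpr ⟨x - a', hx.2.2, x - a, hx.1.2, sub_sub_sub_cancel_left a' a x⟩

end AddCommGroup

theorem exists_intCast_of_mem_sub_image_range {R : Type*} [AddCommGroupWithOne R] [DecidableEq R]
    {b x : R} {l : ℕ}
    (hx : x ∈ (range (l + 1)).image (fun i : ℕ => b + (i : R)) -
      (range (l + 1)).image (fun i : ℕ => b + (i : R))) :
    ∃ k : ℤ, |k| ≤ l ∧ x = k := by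
  obtain ⟨_, hy, _, hz, rfl⟩ := mem_sub.mp hx
  obtain ⟨i, hi, rfl⟩ := mem_image.mp hy
  obtain ⟨j, hj, rfl⟩ := mem_image.mp hz
  rw [mem_range] at hi hj
  exact ⟨i - j, abs_sub_le_iff.mpr ⟨by omega, by omega⟩, by push_cast; abel⟩

theorem ZMod.eq_of_intCast_eq_of_abs_sub_lt {N : ℕ} {k d : ℤ} (h : |k - d| < N)
    (hkd : (k : ZMod N) = d) : k = d := by
  refine sub_eq_zero.mp (Int.eq_zero_of_abs_lt_dvd ?_ h)
  rw [← dvd_neg, neg_sub]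
  exact (ZMod.intCast_eq_intCast_iff_dvd_sub _ _ _).mp hkd

theorem ZMod.exists_subset_image_range_of_sub_eq_intCast {N l : ℕ} (hl : 3 * l < N)
    (A : Finset (ZMod N)) (hA : ∀ a ∈ A, ∀ a' ∈ A, ∃ k : ℤ, |k| ≤ l ∧ a - a' = k) :
    ∃ a, A ⊆ (range (l + 1)).image (fun i : ℕ => a + (i : ZMod N)) := by
  rcases A.eq_empty_or_nonempty with rfl | ⟨a₀, ha₀⟩
  · exact ⟨0, empty_subset _⟩
  choose! g hg using fun a ha => hA a ha a₀ ha₀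
  obtain ⟨a, ha, hmin⟩ := A.exists_min_image g ⟨a₀, ha₀⟩
  refine ⟨a, fun x hx => mem_image.mpr ?_⟩
  obtain ⟨k, hk, hxa⟩ := hA x hx a ha
  obtain ⟨hgx, hxa₀⟩ := hg x hx
  obtain ⟨hga, haa₀⟩ := hg a ha
  have hax := hmin x hx
  rw [abs_le] at hk hgx hga
  have hgk : g x - g a = k := by
    refine ZMod.eq_of_intCast_eq_of_abs_sub_lt (N := N) (abs_lt.mpr ⟨by omega, by omega⟩) ?_
    push_cast
    rw [← hxa₀, ← haa₀, ← hxa]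
    abel
  refine ⟨k.toNat, mem_range.mpr (by omega), ?_⟩
  rw [← eq_sub_iff_add_eq', hxa, ← Int.cast_natCast, Int.toNat_of_nonneg (by omega)]

theorem subset_interval_of_difference_set_general {N : ℕ}
    (A : Finset (ZMod N)) (n : ℕ) (hn : A.card = n)
    (b : ZMod N) (l : ℕ) (hl : (l : ℝ) < N / 3)
    (h : (((A - A) \ ((Finset.range (l + 1)).image (fun i : ℕ => b + (i : ZMod N)))).card : ℝ)
        < n / 2) :
    ∃ a : ZMod N, A ⊆ (Finset.range (l + 1)).image (fun i : ℕ => a + (i : ZMod N)) := by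
  set I := (range (l + 1)).image (fun i : ℕ => b + (i : ZMod N))
  have h3l : 3 * l < N := by exact_mod_cast (by linarith : (3 * l : ℝ) < N)
  have hsmall : 2 * #((A - A) \ I) < #A := by
    subst hn
    exact_mod_cast (by linarith : (2 * #((A - A) \ I) : ℝ) < #A)
  refine ZMod.exists_subset_image_range_of_sub_eq_intCast h3l A fun a ha a' ha' => ?_
  exact exists_intCast_of_mem_sub_image_range
    (sub_subset_sub_of_two_mul_card_sdiff_lt hsmall (sub_mem_sub ha ha'))

/-- **Lemma 7** (Green–Ruzsa). Let `N` be prime and `A ⊆ ℤ/Nℤ` of size `n`. If for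
some `b` and some integer `l < N/3` all but fewer than `n/2` elements of `A − A` lie
in the interval `{b, b+1, …, b+l}`, then `A ⊆ {a, a+1, …, a+l}` for some `a`. -/
theorem subset_interval_of_difference_set {N : ℕ} (hN : N.Prime)
    (A : Finset (ZMod N)) (n : ℕ) (hn : A.card = n)
    (b : ZMod N) (l : ℕ) (hl : (l : ℝ) < N / 3)
    (h : (((A - A) \ ((Finset.range (l + 1)).image (fun i : ℕ => b + (i : ZMod N)))).card : ℝ)
        < n / 2) :
    ∃ a : ZMod N, A ⊆ (Finset.range (l + 1)).image (fun i : ℕ => a + (i : ZMod N)) :=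
  subset_interval_of_difference_set_general A n hn b l hl h
end

section
/- Let N be a positive integer and B ⊆ ℤ/Nℤ a nonempty set. Let ε, δ be real numbers with 0 < ε < 1 and 0 < δ < 1/2, and suppose |B̂(1)| ≥ (1 − 8εδ²)|B|, where B̂(r) = Σ_{b∈B} e^(2πi b r / N). Then there exist a ∈ ℤ/Nℤ and an integer l < δN such that |B \ {a, a+1, …, a+l}| < ε|B|. -/
/-!
Rotate `B̂(1)` onto the positive real axis: with `φ = arg B̂(1) / 2π` one gets
`∑_{b ∈ B} (1 - cos 2π(b/N - φ)) = |B| - |B̂(1)| ≤ 8εδ²|B|`, so `B` clusters around `φN`.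
Take an interval of `⌈δN⌉` consecutive residues whose starting point near `φN` is random, with
Lev's distribution `startCdf`: under it a point at normalised distance `y` from `φN` is missed with
probability at most `versineRatio δ y = (1 - cos 2πy) / (2(1 - cos πδ))`. The expected number of
missed points of `B` is then at most `8εδ²|B| / (2(1 - cos πδ)) < ε|B|`, because
`4δ² < 1 - cos πδ` for `δ < 1/2`, and some interval does at least as well as the average.
-/

open Complex Finset
open scoped Real

theorem Int.sum_Ioc_sub {M : Type*} [AddCommGroup M] (f : ℤ → M) {a b : ℤ} (h : a ≤ b) :
    ∑ s ∈ Ioc a b, (f s - f (s - 1)) = f b - f a := by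
  induction b, h using Int.leInduction with
  | base => simp
  | succ b hab ih =>
    have hlast : Ioc b (b + 1) = {b + 1} := by ext; simp; omega
    rw [← Ioc_union_Ioc_eq_Ioc hab (by omega), sum_union (Ioc_disjoint_Ioc_of_le le_rfl), ih,
      hlast, sum_singleton, add_sub_cancel_right, sub_add_sub_cancel']

theorem Finset.exists_lt_of_sum_mul_lt {ι : Type*} {s : Finset ι} {w f : ι → ℝ} {c : ℝ}
    (hw : ∀ i ∈ s, 0 ≤ w i) (hw1 : ∑ i ∈ s, w i = 1) (h : ∑ i ∈ s, w i * f i < c) :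
    ∃ i ∈ s, f i < c := by
  rw [← one_mul c, ← hw1, sum_mul] at h
  obtain ⟨i, hi, hlt⟩ := exists_lt_of_sum_lt h
  exact ⟨i, hi, lt_of_mul_lt_mul_left hlt (hw i hi)⟩

theorem Complex.norm_sum_exp_mul_I_eq_sum_cos {ι : Type*} (s : Finset ι) (θ : ι → ℝ) :
    ‖∑ i ∈ s, exp (θ i * I)‖ =
      ∑ i ∈ s, Real.cos (θ i - arg (∑ i ∈ s, exp (θ i * I))) := by
  set S := ∑ i ∈ s, exp (θ i * I)
  have hS : ((‖S‖ : ℝ) : ℂ) = S * exp (-(arg S : ℂ) * I) := by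
    nth_rw 2 [← norm_mul_exp_arg_mul_I S]
    rw [mul_assoc, ← Complex.exp_add, ← add_mul, add_neg_cancel, zero_mul, Complex.exp_zero,
      mul_one]
  rw [← ofReal_re ‖S‖, hS, sum_mul, re_sum]
  refine sum_congr rfl fun i _ => ?_
  rw [← Complex.exp_add, ← add_mul, ← ofReal_neg, ← ofReal_add, exp_ofReal_mul_I_re,
    ← sub_eq_add_neg]

theorem one_sub_cos_pi_mul_pos {δ : ℝ} (hδ : 0 < δ) (hδ1 : δ ≤ 1) :
    0 < 1 - Real.cos (π * δ) := by
  have := Real.cos_lt_cos_of_nonneg_of_le_pi le_rfl (by nlinarith [Real.pi_pos])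
    (by positivity : 0 < π * δ)
  rw [Real.cos_zero] at this
  linarith

theorem four_mul_sq_lt_one_sub_cos_pi_mul {δ : ℝ} (hδ : 0 < δ) (hδ1 : δ < 1 / 2) :
    4 * δ ^ 2 < 1 - Real.cos (π * δ) := by
  -- strict concavity of `sin` on the chord from `0` to `π / 4`, where `sin (π / 4) = √2 / 2`
  have hsin : √2 * δ < Real.sin (π * δ / 2) := by
    have h := strictConcaveOn_sin_Icc.2 (Set.mem_Icc.2 ⟨le_rfl, Real.pi_pos.le⟩)
      (Set.mem_Icc.2 ⟨by positivity, by linarith [Real.pi_pos]⟩)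
      (by positivity : (0 : ℝ) < π / 4).ne
      (by linarith : 0 < 1 - 2 * δ) (by positivity : 0 < 2 * δ) (by ring)
    simp only [smul_eq_mul, Real.sin_zero, Real.sin_pi_div_four, mul_zero, zero_add] at h
    rwa [show 2 * δ * (√2 / 2) = √2 * δ by ring, show 2 * δ * (π / 4) = π * δ / 2 by ring]
      at h
  have hcos : Real.cos (π * δ) = 1 - 2 * Real.sin (π * δ / 2) ^ 2 := by
    rw [← Real.cos_two_mul_eq_one_sub]; ring_nf
  have hsq : (√2 * δ) ^ 2 = 2 * δ ^ 2 := by rw [mul_pow, Real.sq_sqrt zero_le_two]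
  nlinarith [mul_pos (Real.sqrt_pos.2 zero_lt_two) hδ]

noncomputable def versineRatio (δ y : ℝ) : ℝ :=
  (1 - Real.cos (2 * π * y)) / (2 * (1 - Real.cos (π * δ)))

section versineRatio

variable {δ : ℝ}

theorem versineRatio_nonneg (hδ : 0 < δ) (hδ1 : δ ≤ 1) (y : ℝ) : 0 ≤ versineRatio δ y :=
  div_nonneg (by linarith [Real.cos_le_one (2 * π * y)])
    (by linarith [one_sub_cos_pi_mul_pos hδ hδ1])

theorem versineRatio_abs (δ y : ℝ) : versineRatio δ |y| = versineRatio δ y := by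
  rw [versineRatio, versineRatio, ← Real.cos_abs (2 * π * y), abs_mul,
    abs_of_pos Real.two_pi_pos]

theorem versineRatio_sub_intCast (δ y : ℝ) (n : ℤ) :
    versineRatio δ (y - n) = versineRatio δ y := by
  rw [versineRatio, versineRatio, mul_sub, mul_comm (2 * π) (n : ℝ), Real.cos_sub_int_mul_two_pi]

theorem versineRatio_le_versineRatio (hδ : 0 < δ) (hδ1 : δ ≤ 1) {x y : ℝ} (hx : 0 ≤ x)
    (hxy : x ≤ y) (hy : y ≤ 1 / 2) : versineRatio δ x ≤ versineRatio δ y := by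
  have := Real.cos_le_cos_of_nonneg_of_le_pi (by positivity) (by nlinarith [Real.pi_pos])
    (by nlinarith [Real.pi_pos] : 2 * π * x ≤ 2 * π * y)
  exact div_le_div_of_nonneg_right (by linarith) (by linarith [one_sub_cos_pi_mul_pos hδ hδ1])

theorem one_le_versineRatio (hδ : 0 < δ) (hδ1 : δ ≤ 1 / 2) {y : ℝ} (h1 : δ ≤ |y|)
    (h2 : |y| ≤ 1 / 2) : 1 ≤ versineRatio δ y := by
  rw [← versineRatio_abs, versineRatio,
    one_le_div₀ (by linarith [one_sub_cos_pi_mul_pos hδ (by linarith)])]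
  have hπ := Real.pi_pos
  have hcos : Real.cos (2 * π * |y|) ≤ Real.cos (2 * (π * δ)) :=
    Real.cos_le_cos_of_nonneg_of_le_pi (by positivity) (by nlinarith) (by nlinarith)
  have hcos0 : 0 ≤ Real.cos (π * δ) :=
    Real.cos_nonneg_of_mem_Icc (Set.mem_Icc.2 ⟨by nlinarith, by nlinarith⟩)
  nlinarith [Real.cos_two_mul (π * δ), Real.cos_le_one (π * δ)]

theorem one_le_versineRatio_add_versineRatio_add (hδ : 0 < δ) (hδ1 : δ ≤ 1 / 2) (x : ℝ) :
    1 ≤ versineRatio δ x + versineRatio δ (x + δ) := by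
  rw [versineRatio, versineRatio, ← add_div,
    one_le_div₀ (by linarith [one_sub_cos_pi_mul_pos hδ (by linarith)])]
  have hπ := Real.pi_pos
  have hsum : Real.cos (2 * π * x) + Real.cos (2 * π * (x + δ))
      = 2 * Real.cos (π * (2 * x + δ)) * Real.cos (π * δ) := by
    rw [Real.cos_add_cos, show (2 * π * x - 2 * π * (x + δ)) / 2 = -(π * δ) by ring,
      Real.cos_neg]
    ring_nf
  have hcos0 : 0 ≤ Real.cos (π * δ) :=
    Real.cos_nonneg_of_mem_Icc (Set.mem_Icc.2 ⟨by nlinarith, by nlinarith⟩)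
  nlinarith [Real.cos_le_one (π * (2 * x + δ))]

end versineRatio

/-- Distribution function of the random starting point of the interval, measured from the centre
in units of `N`; an interval of length `δ` then misses a point at position `y` with probability
`1 - startCdf δ y + startCdf δ (y - δ)`. -/
noncomputable def startCdf (δ e : ℝ) : ℝ :=
  if 0 ≤ e then 1 else if e ≤ -δ then 0 else min 1 (versineRatio δ (e + δ))

section startCdf

variable {δ : ℝ}

theorem startCdf_of_nonneg {e : ℝ} (he : 0 ≤ e) : startCdf δ e = 1 := if_pos he

theorem startCdf_of_le_neg (hδ : 0 < δ) {e : ℝ} (he : e ≤ -δ) : startCdf δ e = 0 := by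
  rw [startCdf, if_neg (by linarith), if_pos he]

theorem startCdf_le_one (e : ℝ) : startCdf δ e ≤ 1 := by
  unfold startCdf
  split_ifs
  exacts [le_rfl, zero_le_one, min_le_left _ _]

theorem startCdf_nonneg (hδ : 0 < δ) (hδ1 : δ ≤ 1) (e : ℝ) : 0 ≤ startCdf δ e := by
  unfold startCdf
  split_ifs
  exacts [zero_le_one, le_rfl, le_min zero_le_one (versineRatio_nonneg hδ hδ1 _)]

theorem startCdf_le_versineRatio_add (hδ : 0 < δ) (hδ1 : δ ≤ 1) {e : ℝ} (he : e < 0) :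
    startCdf δ e ≤ versineRatio δ (e + δ) := by
  rw [startCdf, if_neg he.not_ge]
  split_ifs
  exacts [versineRatio_nonneg hδ hδ1 _, min_le_right _ _]

theorem startCdf_mono (hδ : 0 < δ) (hδ1 : δ ≤ 1 / 2) : Monotone (startCdf δ) := by
  intro u v huv
  by_cases hv : 0 ≤ v
  · rw [startCdf_of_nonneg hv]
    exact startCdf_le_one u
  by_cases hu : u ≤ -δ
  · rw [startCdf_of_le_neg hδ hu]
    exact startCdf_nonneg hδ (by linarith) v
  rw [startCdf, startCdf, if_neg (by linarith), if_neg hu, if_neg hv, if_neg (by linarith)]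
  exact min_le_min le_rfl
    (versineRatio_le_versineRatio hδ (by linarith) (by linarith) (by linarith) (by linarith))

theorem one_sub_startCdf_add_startCdf_sub_le (hδ : 0 < δ) (hδ1 : δ ≤ 1 / 2) {y : ℝ}
    (hy : |y| ≤ 1 / 2) : 1 - startCdf δ y + startCdf δ (y - δ) ≤ versineRatio δ y := by
  rcases abs_le.1 hy with ⟨hy1, hy2⟩
  by_cases hyδ : δ ≤ |y|
  · have := one_le_versineRatio hδ hδ1 hyδ hy
    by_cases hy0 : 0 ≤ y
    · linarith [startCdf_of_nonneg (δ := δ) hy0, startCdf_le_one (δ := δ) (y - δ)]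
    · rw [abs_of_neg (not_le.1 hy0)] at hyδ
      linarith [startCdf_of_le_neg hδ (e := y) (by linarith),
        startCdf_of_le_neg hδ (e := y - δ) (by linarith)]
  push Not at hyδ
  rcases abs_lt.1 hyδ with ⟨hyδ1, hyδ2⟩
  by_cases hy0 : 0 ≤ y
  · have := startCdf_le_versineRatio_add hδ (by linarith) (e := y - δ) (by linarith)
    rw [sub_add_cancel] at this
    linarith [startCdf_of_nonneg (δ := δ) hy0]
  · rw [startCdf_of_le_neg hδ (e := y - δ) (by linarith), startCdf, if_neg hy0,
      if_neg (by linarith)]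
    have := one_le_versineRatio_add_versineRatio_add hδ hδ1 y
    have := versineRatio_nonneg hδ (by linarith) y
    rcases min_cases 1 (versineRatio δ (y + δ)) with ⟨h, _⟩ | ⟨h, _⟩ <;> rw [h] <;>
      linarith

end startCdf

def cyclicInterval {N : ℕ} (a : ZMod N) (l : ℕ) : Finset (ZMod N) :=
  (range (l + 1)).image fun i : ℕ => a + i

theorem intCast_mem_cyclicInterval {N l : ℕ} {s β : ℤ} (h1 : s ≤ β) (h2 : β ≤ s + l) :
    (β : ZMod N) ∈ cyclicInterval (s : ZMod N) l := by
  refine mem_image.2 ⟨(β - s).toNat, mem_range.2 (by omega), ?_⟩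
  rw [← Int.cast_natCast, Int.toNat_of_nonneg (by omega), Int.cast_sub, add_sub_cancel]

theorem Monotone.sum_filter_not_sub_le {g : ℤ → ℝ} (hg : Monotone g) {A C a b : ℤ}
    (hAa : A ≤ a) (hab : a ≤ b) (hbC : b ≤ C) (p : ℤ → Prop) [DecidablePred p]
    (hp : ∀ s ∈ Ioc a b, p s) :
    ∑ s ∈ (Ioc A C).filter (fun s => ¬ p s), (g s - g (s - 1)) ≤
      g C - g A - (g b - g a) := by
  have hsub : Ioc a b ⊆ (Ioc A C).filter p := fun s hs =>
    mem_filter.2 ⟨Ioc_subset_Ioc hAa hbC hs, hp s hs⟩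
  have hJ := sum_le_sum_of_subset_of_nonneg (f := fun s => g s - g (s - 1)) hsub
    fun s _ _ => sub_nonneg.2 (hg (by omega))
  rw [Int.sum_Ioc_sub g hab] at hJ
  rw [← Int.sum_Ioc_sub g (hAa.trans (hab.trans hbC)),
    ← sum_filter_add_sum_filter_not (Ioc A C) p]
  linarith

theorem sum_mul_card_sdiff_eq_sum_sum_filter {α κ : Type*} [DecidableEq α] (B : Finset α)
    (K : Finset κ) (w : κ → ℝ) (t : κ → Finset α) :
    ∑ k ∈ K, w k * #(B \ t k) = ∑ b ∈ B, ∑ k ∈ K.filter (fun k => b ∉ t k), w k := by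
  simp_rw [sum_filter, sdiff_eq_filter, card_filter, Nat.cast_sum, mul_sum]
  rw [sum_comm]
  refine sum_congr rfl fun b _ => sum_congr rfl fun k _ => ?_
  split_ifs <;> simp

noncomputable def intervalStartCdf (δ : ℝ) (N : ℕ) (c : ℝ) (s : ℤ) : ℝ :=
  startCdf δ ((s - c) / N)

section IntervalStart

variable {N : ℕ} {δ : ℝ}

theorem intervalStartCdf_mono (hδ : 0 < δ) (hδ1 : δ ≤ 1 / 2) (c : ℝ) :
    Monotone (intervalStartCdf δ N c) := fun s t hst =>
  startCdf_mono hδ hδ1 <| by gcongr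

theorem intervalStartCdf_of_le [NeZero N] (hδ : 0 < δ) (hδ1 : δ ≤ 1) {c : ℝ} {s : ℤ}
    (hs : (s : ℝ) ≤ c - N) : intervalStartCdf δ N c s = 0 := by
  have hN : (0 : ℝ) < N := by exact_mod_cast NeZero.pos N
  exact startCdf_of_le_neg hδ <| by rw [div_le_iff₀ hN]; nlinarith

theorem intervalStartCdf_of_ge {c : ℝ} {s : ℤ} (hs : c ≤ s) : intervalStartCdf δ N c s = 1 :=
  startCdf_of_nonneg <| div_nonneg (by linarith) N.cast_nonneg

theorem sum_filter_not_mem_cyclicInterval_le [NeZero N] (hδ : 0 < δ) (hδ1 : δ ≤ 1 / 2)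
    {l : ℕ} (hl : δ * N ≤ l + 1) {c : ℝ} {A C β : ℤ} (hA : (A : ℝ) ≤ c - N - l - 1)
    (hC : c + N ≤ C) (hβ : |(β - c) / N| ≤ 1 / 2) :
    ∑ s ∈ (Ioc A C).filter (fun s : ℤ => (β : ZMod N) ∉ cyclicInterval (s : ZMod N) l),
      (intervalStartCdf δ N c s - intervalStartCdf δ N c (s - 1)) ≤
        versineRatio δ ((β - c) / N) := by
  have hN : (0 : ℝ) < N := by exact_mod_cast NeZero.pos N
  have hβ' := abs_le.1 hβ
  rw [div_le_iff₀ hN, le_div_iff₀ hN] at hβ'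
  have hβA : A ≤ β - l - 1 := by
    have : (A : ℝ) ≤ β - l - 1 := by nlinarith
    exact_mod_cast this
  have hβC : β ≤ C := by
    have : (β : ℝ) ≤ C := by nlinarith
    exact_mod_cast this
  calc _ ≤ intervalStartCdf δ N c C - intervalStartCdf δ N c A
          - (intervalStartCdf δ N c β - intervalStartCdf δ N c (β - l - 1)) :=
        (intervalStartCdf_mono hδ hδ1 c).sum_filter_not_sub_le hβA (by omega) hβC _
          fun s hs => intCast_mem_cyclicInterval (mem_Ioc.1 hs).2
            (by linarith [(mem_Ioc.1 hs).1])
    _ = 1 - startCdf δ ((β - c) / N) + startCdf δ ((β - c) / N - (l + 1) / N) := by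
        rw [intervalStartCdf_of_ge (by linarith),
          intervalStartCdf_of_le hδ (by linarith) (by linarith)]
        simp only [intervalStartCdf]; push_cast; ring_nf
    _ ≤ 1 - startCdf δ ((β - c) / N) + startCdf δ ((β - c) / N - δ) := by
        gcongr
        exact startCdf_mono hδ hδ1 (by gcongr; rwa [le_div_iff₀ hN])
    _ ≤ versineRatio δ ((β - c) / N) := one_sub_startCdf_add_startCdf_sub_le hδ hδ1 hβ

end IntervalStart

theorem exists_card_sdiff_cyclicInterval_lt {N : ℕ} [NeZero N] (B : Finset (ZMod N)) {δ : ℝ}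
    (hδ : 0 < δ) (hδ1 : δ ≤ 1 / 2) {l : ℕ} (hl : δ * N ≤ l + 1) (φ : ℝ) {X : ℝ}
    (hX : ∑ b ∈ B, versineRatio δ (b.val / N - φ) < X) :
    ∃ a, (#(B \ cyclicInterval a l) : ℝ) < X := by
  have hN : (0 : ℝ) < N := by exact_mod_cast NeZero.pos N
  set c := N * φ
  set A : ℤ := ⌊c⌋ - N - l - 1
  set C : ℤ := ⌈c⌉ + N
  have hA : (A : ℝ) ≤ c - N - l - 1 := by
    simp only [A]; push_cast; linarith [Int.floor_le c]
  have hC : c + N ≤ (C : ℝ) := by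
    simp only [C]; push_cast; linarith [Int.le_ceil c]
  have hmiss : ∀ b ∈ B,
      ∑ s ∈ (Ioc A C).filter (fun s : ℤ => b ∉ cyclicInterval (s : ZMod N) l),
        (intervalStartCdf δ N c s - intervalStartCdf δ N c (s - 1)) ≤
          versineRatio δ (b.val / N - φ) := by
    intro b _
    -- the lift of `b` to `ℤ` nearest to `c`
    set r := round ((b.val : ℝ) / N - φ)
    have hlift : (((b.val - N * r : ℤ) : ℝ) - c) / N = b.val / N - φ - r := by
      push_cast; field_simp; ring
    have hb : ((b.val - N * r : ℤ) : ZMod N) = b := by simp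
    have := sum_filter_not_mem_cyclicInterval_le hδ hδ1 hl hA hC (hlift ▸ abs_sub_round _)
    rwa [hb, hlift, versineRatio_sub_intCast] at this
  have hAC : A ≤ C := by
    have : (A : ℝ) ≤ C := by linarith
    exact_mod_cast this
  have hweights :
      ∑ s ∈ Ioc A C, (intervalStartCdf δ N c s - intervalStartCdf δ N c (s - 1)) = 1 := by
    rw [Int.sum_Ioc_sub _ hAC, intervalStartCdf_of_ge (s := C) (by linarith),
      intervalStartCdf_of_le hδ (by linarith) (by linarith [l.cast_nonneg (α := ℝ)]), sub_zero]
  obtain ⟨s, -, hs⟩ := exists_lt_of_sum_mul_lt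
    (fun s _ => sub_nonneg.2 (intervalStartCdf_mono hδ hδ1 c (by omega))) hweights
    (f := fun s : ℤ => (#(B \ cyclicInterval (s : ZMod N) l) : ℝ)) <| by
      rw [sum_mul_card_sdiff_eq_sum_sum_filter]
      exact (sum_le_sum hmiss).trans_lt hX
  exact ⟨s, hs⟩

theorem sum_versineRatio_sub_arg_eq {ι : Type*} (s : Finset ι) (δ : ℝ) (x : ι → ℝ) :
    ∑ i ∈ s,
        versineRatio δ (x i - arg (∑ j ∈ s, exp ((2 * π * x j : ℝ) * I)) / (2 * π)) =
      (#s - ‖∑ j ∈ s, exp ((2 * π * x j : ℝ) * I)‖) /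
        (2 * (1 - Real.cos (π * δ))) := by
  have hterm : ∀ i,
      versineRatio δ (x i - arg (∑ j ∈ s, exp ((2 * π * x j : ℝ) * I)) / (2 * π)) =
        (1 - Real.cos (2 * π * x i - arg (∑ j ∈ s, exp ((2 * π * x j : ℝ) * I)))) /
          (2 * (1 - Real.cos (π * δ))) := fun i => by
    rw [versineRatio, mul_sub, mul_div_cancel₀ _ Real.two_pi_pos.ne']
  rw [sum_congr rfl fun i _ => hterm i, ← sum_div, sum_sub_distrib, sum_const, nsmul_one,
    ← norm_sum_exp_mul_I_eq_sum_cos]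

theorem lev_large_fourier_coefficient'_general {N : ℕ} (hN : 0 < N)
    (B : Finset (ZMod N)) (hB : B.Nonempty) (ε δ : ℝ)
    (hε : 0 < ε) (hδ : 0 < δ) (hδ1 : δ < 1 / 2)
    (hfourier :
      (1 - 8 * ε * δ ^ 2) * B.card ≤
        ‖∑ b ∈ B,
          Complex.exp (2 * Real.pi * Complex.I * ((b * 1 : ZMod N).val : ℂ) / N)‖) :
    ∃ (a : ZMod N) (l : ℕ), (l : ℝ) < δ * N ∧
      ((B \ ((Finset.range (l + 1)).image (fun i : ℕ => a + (i : ZMod N)))).card : ℝ)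
        < ε * B.card := by
  have : NeZero N := ⟨hN.ne'⟩
  set S := ∑ b ∈ B, exp ((2 * π * (b.val / N) : ℝ) * I)
  have hS : (1 - 8 * ε * δ ^ 2) * #B ≤ ‖S‖ := by
    convert hfourier using 4 with b; push_cast; ring_nf
  have hX : ∑ b ∈ B, versineRatio δ (b.val / N - arg S / (2 * π)) < ε * #B := by
    rw [sum_versineRatio_sub_arg_eq,
      div_lt_iff₀ (by linarith [one_sub_cos_pi_mul_pos hδ (by linarith)])]
    nlinarith [four_mul_sq_lt_one_sub_cos_pi_mul hδ hδ1,
      mul_pos hε (by exact_mod_cast hB.card_pos : (0 : ℝ) < #B)]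
  have hl := Nat.one_le_ceil_iff.2 (by positivity : 0 < δ * N)
  obtain ⟨a, ha⟩ := exists_card_sdiff_cyclicInterval_lt B hδ hδ1.le (l := ⌈δ * N⌉₊ - 1)
    (by rw [Nat.cast_sub hl]; push_cast; linarith [Nat.le_ceil (δ * N)]) _ hX
  refine ⟨a, ⌈δ * N⌉₊ - 1, ?_, ha⟩
  rw [Nat.cast_sub hl]; push_cast
  linarith [Nat.ceil_lt_add_one (by positivity : 0 ≤ δ * N)]

/-- **Lemma 8'** (Lev, weak form). Let `N` be a positive integer and `B ⊆ ℤ/Nℤ` nonempty. Let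
`0 < ε < 1` and `0 < δ < 1/2` be reals with
`|B̂(1)| ≥ (1 − 8εδ²)|B|`, where `B̂(r) = ∑_{b ∈ B} e(br/N)`. Then there
are `a ∈ ℤ/Nℤ` and an integer `l < δN` with `|B \ {a, a+1, …, a+l}| < ε|B|`. -/
theorem lev_large_fourier_coefficient' {N : ℕ} (hN : 0 < N)
    (B : Finset (ZMod N)) (hB : B.Nonempty) (ε δ : ℝ)
    (hε : 0 < ε) (hε1 : ε < 1) (hδ : 0 < δ) (hδ1 : δ < 1 / 2)
    (hfourier :
      (1 - 8 * ε * δ ^ 2) * B.card ≤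
        ‖∑ b ∈ B,
          Complex.exp (2 * Real.pi * Complex.I * ((b * 1 : ZMod N).val : ℂ) / N)‖) :
    ∃ (a : ZMod N) (l : ℕ), (l : ℝ) < δ * N ∧
      ((B \ ((Finset.range (l + 1)).image (fun i : ℕ => a + (i : ZMod N)))).card : ℝ)
        < ε * B.card :=
  lev_large_fourier_coefficient'_general hN B hB ε δ hε hδ hδ1 hfourier
end

section
/- Let G be a finite abelian group of cardinality N and let B ⊆ G be a nonempty set with |B| = βN. Assume B is k-covering for some integer k ≥ 2, and that β ≤ 14^(−k−1). Then there is a character γ of G with γ ≠ γ₀ (the principal character) such that |B̂(γ)| ≥ (1 − η)|B|, where η = 18·β^(1/k)·log(1/β)/k. -/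
/-!
Suppose every nontrivial coefficient satisfies `|B̂(γ)| < (1 - η)|B|`. By orthogonality and
Parseval, the nontrivial characters then contribute less than the trivial term `|B|^(m+2)` to
`∑_γ B̂(γ)^(m+2) γ(-x)` as soon as `(1 - η)^m ≤ β`, which holds for `m = ⌈k / (18 β^(1/k))⌉`;
so `G = (m + 2)B`. Iterating the covering hypothesis gives `(m + 2)B ⊆ B + (m + 1)(T - T)`, and
every element of `(m + 1)(T - T)` is an integer combination of `T` with ℓ¹-norm at most
`2(m + 1)`. There are at most `2^k C(2(m + 1) + k, k) < 1/β` such combinations, so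
`N < |B|/β = N`.
-/

open Pointwise Finset

namespace AddChar

lemma map_sum_eq_prod {A M ι : Type*} [AddCommMonoid A] [CommMonoid M] (ψ : AddChar A M)
    (s : Finset ι) (f : ι → A) : ψ (∑ i ∈ s, f i) = ∏ i ∈ s, ψ (f i) := by
  induction s using Finset.cons_induction with
  | empty => simp
  | cons a s ha ih => rw [sum_cons, prod_cons, map_add_eq_mul, ih]

end AddChar

section Fourier

variable {G : Type*} [AddCommGroup G] [Fintype G] [DecidableEq G] (B : Finset G)

lemma sum_addChar_norm_sum_sq :
    ∑ γ : AddChar G ℂ, ‖∑ b ∈ B, γ b‖ ^ 2 = Fintype.card G * #B := by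
  have hγ (γ : AddChar G ℂ) :
      ((‖∑ b ∈ B, γ b‖ ^ 2 : ℝ) : ℂ) = ∑ b ∈ B, ∑ b' ∈ B, γ (b - b') := by
    rw [Complex.ofReal_pow, ← Complex.mul_conj', map_sum, sum_mul_sum]
    refine sum_congr rfl fun b _ => sum_congr rfl fun b' _ => ?_
    rw [← AddChar.map_neg_eq_conj, ← AddChar.map_add_eq_mul, sub_eq_add_neg]
  have hsum : ((∑ γ : AddChar G ℂ, ‖∑ b ∈ B, γ b‖ ^ 2 : ℝ) : ℂ) = Fintype.card G * #B := by
    rw [Complex.ofReal_sum]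
    simp_rw [hγ]
    rw [sum_comm]
    simp_rw [sum_comm (s := univ), AddChar.sum_apply_eq_ite, sub_eq_zero]
    simp [mul_comm]
  exact_mod_cast hsum

lemma sum_addChar_sum_pow_mul_apply_neg (n : ℕ) (x : G) :
    ∑ γ : AddChar G ℂ, (∑ b ∈ B, γ b) ^ n * γ (-x) =
      Fintype.card G * #{p ∈ Fintype.piFinset (fun _ : Fin n => B) | ∑ i, p i = x} := by
  have hγ (γ : AddChar G ℂ) : (∑ b ∈ B, γ b) ^ n * γ (-x) =
      ∑ p ∈ Fintype.piFinset (fun _ : Fin n => B), γ (∑ i, p i - x) := by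
    rw [← Fin.prod_const, prod_univ_sum, sum_mul]
    refine sum_congr rfl fun p _ => ?_
    rw [sub_eq_add_neg, AddChar.map_add_eq_mul, AddChar.map_sum_eq_prod]
  simp_rw [hγ]
  rw [sum_comm]
  simp_rw [AddChar.sum_apply_eq_ite, sub_eq_zero]
  simp [sum_ite, mul_comm]

lemma mem_nsmul_of_sum_addChar_ne_zero {n : ℕ} {x : G}
    (h : ∑ γ : AddChar G ℂ, (∑ b ∈ B, γ b) ^ n * γ (-x) ≠ 0) : x ∈ n • B := by
  rw [sum_addChar_sum_pow_mul_apply_neg] at h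
  obtain ⟨p, hp⟩ := card_ne_zero.1 (by exact_mod_cast right_ne_zero_of_mul h)
  rw [mem_filter, Fintype.mem_piFinset] at hp
  rw [← mem_coe, coe_nsmul, Set.mem_nsmul_iff_sum]
  exact ⟨p, hp⟩

lemma univ_subset_nsmul_of_forall_norm_sum_le {ε : ℝ} {m : ℕ} (hB : B.Nonempty)
    (hγ : ∀ γ : AddChar G ℂ, γ ≠ 1 → ‖∑ b ∈ B, γ b‖ ≤ ε * #B)
    (hε : ε ^ m * (Fintype.card G - #B) < #B) : (univ : Finset G) ⊆ (m + 2) • B := by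
  classical
  intro x _
  have hB1 : (1 : ℝ) ≤ #B := by exact_mod_cast hB.card_pos
  have hrest : ‖∑ γ ∈ (univ : Finset (AddChar G ℂ)).erase 1,
      (∑ b ∈ B, γ b) ^ (m + 2) * γ (-x)‖ < #B ^ (m + 2) :=
    calc _ ≤ ∑ γ ∈ (univ : Finset (AddChar G ℂ)).erase 1,
            (ε * #B) ^ m * ‖∑ b ∈ B, γ b‖ ^ 2 := by
          refine norm_sum_le_of_le _ fun γ hγ1 => ?_
          rw [norm_mul, AddChar.norm_apply, mul_one, norm_pow, pow_add]
          gcongr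
          exact hγ γ (ne_of_mem_erase hγ1)
      _ = ε ^ m * (Fintype.card G - #B) * #B ^ (m + 1) := by
          rw [← mul_sum, sum_erase_eq_sub (mem_univ 1), sum_addChar_norm_sum_sq]
          simp only [AddChar.one_apply, sum_const, nsmul_eq_mul, mul_one, Complex.norm_natCast]
          ring
      _ < #B * #B ^ (m + 1) := by gcongr
      _ = #B ^ (m + 2) := by ring
  apply mem_nsmul_of_sum_addChar_ne_zero
  rw [← add_sum_erase _ _ (mem_univ 1)]
  intro h0
  have := congrArg norm (eq_neg_of_add_eq_zero_right h0)
  simp only [AddChar.one_apply, sum_const, nsmul_eq_mul, mul_one, norm_neg, norm_pow,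
    Complex.norm_natCast] at this
  linarith

end Fourier

lemma Finset.succ_nsmul_subset_add_nsmul {G : Type*} [AddCommMonoid G] [DecidableEq G]
    {B S : Finset G} (h : B + B ⊆ B + S) : ∀ n : ℕ, (n + 1) • B ⊆ B + n • S
  | 0 => by simp
  | n + 1 => calc
      (n + 1 + 1) • B = (n + 1) • B + B := succ_nsmul _ _
      _ ⊆ B + n • S + B := by gcongr; exact succ_nsmul_subset_add_nsmul h n
      _ = B + B + n • S := by abel
      _ ⊆ B + S + n • S := by gcongr
      _ = B + (n + 1) • S := by rw [succ_nsmul]; abel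

section IntegerPoints

variable {ι : Type*} [Fintype ι] [DecidableEq ι]

lemma Finset.card_piAntidiag_univ (n : ℕ) :
    #(piAntidiag (univ : Finset ι) n) = (Fintype.card ι + n - 1).choose n := by
  rw [← map_sym_eq_piAntidiag, card_map, sym_univ, card_univ, Sym.card_sym_eq_choose]

variable (ι) in
noncomputable def l1Ball (m : ℕ) : Finset (ι → ℤ) :=
  {v ∈ Fintype.piFinset fun _ => Icc (-m : ℤ) m | ∑ i, (v i).natAbs ≤ m}

lemma mem_l1Ball {m : ℕ} {v : ι → ℤ} : v ∈ l1Ball ι m ↔ ∑ i, (v i).natAbs ≤ m := by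
  refine ⟨fun h => (mem_filter.1 h).2,
    fun h => mem_filter.2 ⟨Fintype.mem_piFinset.2 fun i => ?_, h⟩⟩
  have := (single_le_sum (fun j _ => (v j).natAbs.zero_le) (mem_univ i)).trans h
  rw [mem_Icc]
  omega

lemma card_l1Ball_le (m : ℕ) :
    #(l1Ball ι m) ≤ 2 ^ Fintype.card ι * (m + Fintype.card ι).choose (Fintype.card ι) := by
  calc #(l1Ball ι m)
      ≤ #((univ : Finset (ι → Bool)) ×ˢ piAntidiag (univ : Finset (Option ι)) m) := by
        -- record the signs and the absolute values, plus a slack coordinate making the sum `m`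
        refine card_le_card_of_injOn (fun v => (fun i => decide (v i < 0),
          fun o => o.elim (m - ∑ i, (v i).natAbs) fun i => (v i).natAbs)) ?_ ?_
        · intro v hv
          have := mem_l1Ball.1 hv
          simp only [coe_product, coe_univ, Set.mem_prod, Set.mem_univ, mem_coe, mem_piAntidiag,
            Fintype.sum_option, true_and]
          simp only [Option.elim, mem_univ, implies_true, and_true]
          omega
        · intro v _ w _ hvw
          simp only [Prod.mk.injEq, funext_iff] at hvw
          funext i
          have hsign := hvw.1 i
          have habs := hvw.2 (some i)
          simp only [decide_eq_decide, Option.elim] at hsign habs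
          omega
    _ = _ := by
        rw [card_product, card_univ, Fintype.card_fun, Fintype.card_bool, card_piAntidiag_univ,
          Fintype.card_option, Nat.add_right_comm, Nat.add_sub_cancel, add_comm _ m,
          Nat.choose_symm_add]

lemma sum_natAbs_single_one (a : ι) : ∑ i, ((Pi.single a (1 : ℤ) : ι → ℤ) i).natAbs = 1 := by
  simp [Pi.single_apply, apply_ite]

lemma nsmul_sub_subset_image_l1Ball {G : Type*} [AddCommGroup G] [DecidableEq G] (T : Finset G) :
    ∀ n : ℕ, n • (T - T) ⊆ (l1Ball T (2 * n)).image (Fintype.linearCombination ℤ ((↑) : T → G))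
  | 0 => by simpa using ⟨0, mem_l1Ball.2 (by simp), map_zero _⟩
  | n + 1 => by
      intro x hx
      rw [succ_nsmul, mem_add] at hx
      obtain ⟨y, hy, d, hd, rfl⟩ := hx
      obtain ⟨v, hv, rfl⟩ := mem_image.1 (nsmul_sub_subset_image_l1Ball T n hy)
      obtain ⟨a, ha, b, hb, rfl⟩ := mem_sub.1 hd
      refine mem_image.2 ⟨v + Pi.single (⟨a, ha⟩ : T) 1 - Pi.single (⟨b, hb⟩ : T) 1,
        mem_l1Ball.2 ?_, by simp [add_sub_assoc]⟩
      rw [mem_l1Ball] at hv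
      calc ∑ i, ((v + Pi.single (⟨a, ha⟩ : T) 1 - Pi.single (⟨b, hb⟩ : T) 1 : T → ℤ) i).natAbs
          ≤ ∑ i, ((v i).natAbs + ((Pi.single ⟨a, ha⟩ (1 : ℤ) : T → ℤ) i).natAbs +
              ((Pi.single ⟨b, hb⟩ (1 : ℤ) : T → ℤ) i).natAbs) :=
            sum_le_sum fun i _ => (Int.natAbs_sub_le _ _).trans
              (add_le_add_left (Int.natAbs_add_le _ _) _)
        _ ≤ 2 * (n + 1) := by
            rw [sum_add_distrib, sum_add_distrib, sum_natAbs_single_one, sum_natAbs_single_one]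
            omega

lemma card_nsmul_sub_le {G : Type*} [AddCommGroup G] [DecidableEq G] (T : Finset G) (n : ℕ) :
    #(n • (T - T)) ≤ 2 ^ #T * (2 * n + #T).choose #T := by
  calc #(n • (T - T)) ≤ #(l1Ball T (2 * n)) :=
        (card_le_card (nsmul_sub_subset_image_l1Ball T n)).trans card_image_le
    _ ≤ _ := by simpa using card_l1Ball_le (ι := T) (2 * n)

end IntegerPoints

lemma card_le_of_univ_subset_nsmul {G : Type*} [AddCommGroup G] [Fintype G] [DecidableEq G]
    {B T : Finset G} (hBT : B + B ⊆ B + (T - T)) {m : ℕ} (hcover : univ ⊆ (m + 2) • B) :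
    Fintype.card G ≤ #B * (2 ^ #T * (2 * (m + 1) + #T).choose #T) := calc
  Fintype.card G = #(univ : Finset G) := card_univ.symm
  _ ≤ #(B + (m + 1) • (T - T)) := card_le_card (hcover.trans (succ_nsmul_subset_add_nsmul hBT _))
  _ ≤ #B * #((m + 1) • (T - T)) := card_add_le
  _ ≤ _ := by gcongr; exact card_nsmul_sub_le T (m + 1)

open Nat in
lemma Nat.choose_le_exp_one_mul_div_pow (M k : ℕ) :
    (M.choose k : ℝ) ≤ (Real.exp 1 * M / k) ^ k := by
  rcases k.eq_zero_or_pos with rfl | hk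
  · simp
  have hk' : (0 : ℝ) < k := by exact_mod_cast hk
  calc (M.choose k : ℝ) ≤ M ^ k / k ! := Nat.choose_le_pow_div k M
    _ = (M / k) ^ k * (k ^ k / k !) := by
        rw [div_pow, ← mul_div_assoc, div_mul_cancel₀ _ (by positivity)]
    _ ≤ (M / k) ^ k * Real.exp k := by gcongr; exact Real.pow_div_factorial_le_exp _ hk'.le k
    _ = (Real.exp 1 * M / k) ^ k := by rw [← Real.exp_one_pow]; ring

lemma five_div_two_le_log_fourteen : (5 / 2 : ℝ) ≤ Real.log 14 := by
  rw [Real.le_log_iff_exp_le (by norm_num)]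
  refine le_of_pow_le_pow_left₀ two_ne_zero (by norm_num) ?_
  calc Real.exp (5 / 2) ^ 2 = Real.exp 1 ^ 5 := by
        rw [← Real.exp_nat_mul, ← Real.exp_nat_mul]; norm_num
    _ ≤ 2.7182818286 ^ 5 := by gcongr; exact Real.exp_one_lt_d9.le
    _ ≤ 14 ^ 2 := by norm_num

lemma rpow_one_div_le_one_div_fourteen {β : ℝ} {k : ℕ} (hβ0 : 0 ≤ β) (hk : 0 < k)
    (hβ : β ≤ (14 : ℝ) ^ (-(k : ℝ) - 1)) : β ^ ((1 : ℝ) / k) ≤ 1 / 14 := by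
  have hk' : (0 : ℝ) < k := by exact_mod_cast hk
  calc β ^ ((1 : ℝ) / k) ≤ ((14 : ℝ) ^ (-(k : ℝ) - 1)) ^ ((1 : ℝ) / k) := by gcongr
    _ = (14 : ℝ) ^ ((-(k : ℝ) - 1) * (1 / k)) := (Real.rpow_mul (by norm_num) _ _).symm
    _ ≤ (14 : ℝ) ^ (-1 : ℝ) := by
        apply Real.rpow_le_rpow_of_exponent_le (by norm_num)
        rw [sub_mul, neg_mul, mul_one_div_cancel hk'.ne']
        linarith [one_div_pos.2 hk']
    _ = 1 / 14 := by norm_num [Real.rpow_neg_one]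

lemma one_sub_mul_log_pow_ceil_le_pow {s : ℝ} (k : ℕ) (hs0 : 0 < s) (hs1 : s ≤ 1)
    (hη : 18 * s * Real.log (1 / s) ≤ 1) :
    (1 - 18 * s * Real.log (1 / s)) ^ ⌈k / (18 * s)⌉₊ ≤ s ^ k := by
  set η := 18 * s * Real.log (1 / s)
  have hη0 : 0 ≤ η := by have := Real.log_nonneg (one_le_one_div hs0 hs1); positivity
  have hexp : (k : ℝ) * Real.log (1 / s) ≤ ⌈k / (18 * s)⌉₊ * η := calc
    (k : ℝ) * Real.log (1 / s) = k / (18 * s) * η := by simp only [η]; field_simp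
    _ ≤ _ := by gcongr; exact Nat.le_ceil _
  calc (1 - η) ^ ⌈k / (18 * s)⌉₊ ≤ Real.exp (-η) ^ ⌈k / (18 * s)⌉₊ := by
        gcongr
        exact Real.one_sub_le_exp_neg η
    _ = Real.exp (-(⌈k / (18 * s)⌉₊ * η)) := by rw [← Real.exp_nat_mul]; ring_nf
    _ ≤ Real.exp (-(k * Real.log (1 / s))) := by gcongr
    _ = s ^ k := by
        rw [one_div, Real.log_inv, mul_neg, neg_neg, Real.exp_nat_mul, Real.exp_log hs0]

lemma two_pow_mul_choose_lt_inv_pow {k m : ℕ} {s : ℝ} (hk : 2 ≤ k) (hs0 : 0 < s)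
    (hs : s ≤ 1 / 45) (hm : (m : ℝ) < k / (18 * s) + 1) :
    ((2 ^ k * (2 * (m + 1) + k).choose k : ℕ) : ℝ) < (s ^ k)⁻¹ := by
  have hk' : (2 : ℝ) ≤ k := by exact_mod_cast hk
  set M := 2 * (m + 1) + k
  have hMs : (M : ℝ) * s ≤ 8 / 45 * k := by
    have hms : (m : ℝ) * s < k / 18 + s := by
      have hcancel : (k : ℝ) / (18 * s) * s = k / 18 := by field_simp
      have := mul_lt_mul_of_pos_right hm hs0
      rwa [add_mul, hcancel, one_mul] at this
    push_cast [M]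
    nlinarith
  have hratio : 2 * Real.exp 1 * M / k < 1 / s := by
    rw [div_lt_div_iff₀ (by positivity) hs0]
    nlinarith [Real.exp_one_lt_d9, Real.exp_pos 1]
  calc ((2 ^ k * M.choose k : ℕ) : ℝ) = 2 ^ k * (M.choose k : ℝ) := by push_cast; ring
    _ ≤ 2 ^ k * (Real.exp 1 * M / k) ^ k := by gcongr; exact Nat.choose_le_exp_one_mul_div_pow M k
    _ = (2 * Real.exp 1 * M / k) ^ k := by rw [← mul_pow]; ring
    _ < (1 / s) ^ k := by gcongr
    _ = (s ^ k)⁻¹ := by rw [one_div, inv_pow]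

lemma le_one_div_forty_five_of_mul_log_lt {s : ℝ} (hs0 : 0 < s) (hs : s ≤ 1 / 14)
    (h : 18 * s * Real.log (1 / s) < 1) : s ≤ 1 / 45 := by
  have : Real.log 14 ≤ Real.log (1 / s) :=
    Real.log_le_log (by norm_num) (by rw [le_div_iff₀ hs0]; linarith)
  nlinarith [five_div_two_le_log_fourteen]

lemma large_fourier_coefficient_of_covering_of_card_eq {G : Type*} [AddCommGroup G] [Fintype G]
    [DecidableEq G] {B T : Finset G} (hB : B.Nonempty) (hBT : B + B ⊆ B + (T - T))
    (hT : 2 ≤ #T) {s : ℝ} (hs0 : 0 < s) (hs : s ≤ 1 / 14)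
    (hcard : (#B : ℝ) = s ^ #T * Fintype.card G) :
    ∃ γ : AddChar G ℂ, γ ≠ 1 ∧ (1 - 18 * s * Real.log (1 / s)) * #B ≤ ‖∑ b ∈ B, γ b‖ := by
  by_contra! hsmall
  have hB1 : (1 : ℝ) ≤ #B := by exact_mod_cast hB.card_pos
  have hsT : s ^ #T < 1 := pow_lt_one₀ hs0.le (by linarith) (by omega)
  have hG : 1 < Fintype.card (AddChar G ℂ) := by
    rw [AddChar.card_eq]
    by_contra! h
    have : (Fintype.card G : ℝ) ≤ 1 := by exact_mod_cast h
    nlinarith [mul_le_mul_of_nonneg_left this (pow_pos hs0 #T).le]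
  obtain ⟨γ, hγ⟩ := Fintype.exists_ne_of_one_lt_card hG 1
  have hη : 18 * s * Real.log (1 / s) < 1 := by
    nlinarith [hsmall γ hγ, norm_nonneg (∑ b ∈ B, γ b)]
  have hcover : univ ⊆ (⌈#T / (18 * s)⌉₊ + 2) • B := by
    refine univ_subset_nsmul_of_forall_norm_sum_le B hB (fun γ hγ => (hsmall γ hγ).le) ?_
    calc _ ≤ s ^ #T * (Fintype.card G - #B) := by
          gcongr
          · exact sub_nonneg.2 (by exact_mod_cast card_le_univ B)
          · exact one_sub_mul_log_pow_ceil_le_pow _ hs0 (by linarith) hη.le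
      _ < #B := by nlinarith [pow_pos hs0 #T]
  have hchoose := two_pow_mul_choose_lt_inv_pow hT hs0
    (le_one_div_forty_five_of_mul_log_lt hs0 hs hη) (Nat.ceil_lt_add_one (by positivity))
  have hlt : (#B : ℝ) * ((2 ^ #T * (2 * (⌈#T / (18 * s)⌉₊ + 1) + #T).choose #T : ℕ) : ℝ) <
      Fintype.card G := calc
    _ < #B * (s ^ #T)⁻¹ := by gcongr
    _ = Fintype.card G := by rw [hcard]; field_simp
  exact hlt.not_ge (by exact_mod_cast card_le_of_univ_subset_nsmul hBT hcover)

/-- **Lemma 10** (Green–Ruzsa). Let `G` be a finite abelian group of cardinality `N`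
and `B ⊆ G` nonempty with `|B| = βN`. If `B` is `k`-covering for some integer `k ≥ 2`
and `β ≤ 14^(−k−1)`, then there is a nontrivial character `γ` of `G` with
`|B̂(γ)| ≥ (1 − η)|B|`, where `η = 18 β^(1/k) log(1/β) / k`. -/
theorem large_fourier_coefficient_of_covering {G : Type*} [AddCommGroup G] [Fintype G]
    [DecidableEq G] (N : ℕ) (hN : Fintype.card G = N)
    (B : Finset G) (hB : B.Nonempty) (β : ℝ) (hβcard : (B.card : ℝ) = β * N)
    (k : ℕ) (hk : 2 ≤ k)
    (hcov : ∃ T : Finset G, T.card = k ∧ B + B ⊆ B + (T - T))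
    (hβ : β ≤ (14 : ℝ) ^ (-(k : ℝ) - 1)) :
    ∃ γ : AddChar G ℂ, γ ≠ 1 ∧
      (1 - 18 * β ^ ((1 : ℝ) / k) * Real.log (1 / β) / k) * B.card ≤
        ‖∑ b ∈ B, γ b‖ := by
  obtain ⟨T, rfl, hBT⟩ := hcov
  subst hN
  have hβ0 : 0 < β := by
    have : (0 : ℝ) < β * Fintype.card G := hβcard ▸ by exact_mod_cast hB.card_pos
    exact pos_of_mul_pos_left this (Nat.cast_nonneg _)
  have hT0 : (#T : ℝ) ≠ 0 := by positivity
  have hsβ : (β ^ ((1 : ℝ) / #T)) ^ #T = β := by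
    rw [← Real.rpow_natCast, ← Real.rpow_mul hβ0.le, one_div_mul_cancel hT0, Real.rpow_one]
  have hlog : Real.log (1 / β) / #T = Real.log (1 / β ^ ((1 : ℝ) / #T)) := by
    conv_lhs => rw [← hsβ, ← one_div_pow, Real.log_pow]
    field_simp
  rw [mul_div_assoc, hlog]
  exact large_fourier_coefficient_of_covering_of_card_eq hB hBT hk (by positivity)
    (rpow_one_div_le_one_div_fourteen hβ0.le (by omega) hβ) (by rw [hsβ, hβcard])
end
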